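/- arXiv:1711.04236 — 7 statements merged into one kernel-verified Lean document; each statement's English description precedes it below -/
import Mathlib

section
/- Let ψ : ℝ → ℝ be real-analytic and 2π-periodic, let t₀ ∈ ℝ and M ≥ 0 an integer, and suppose ψ⁽ᵐ⁾(t₀) = 0 for m = 0, …, M. Then there exists a real-analytic function d : ℝ → ℝ with d(τ + 2π) = (−1)^{M+1} d(τ) for all τ, such that ψ(τ) = sin^{M+1}((t₀ − τ)/2) · d(τ) for all τ ∈ ℝ. -/
open Filter Function Topology

lemma analyticAt_realSin (x : ℝ) : AnalyticAt ℝ Real.sin x := by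
  have h1 : AnalyticAt ℂ Complex.sin (x : ℂ) := Complex.differentiable_sin.analyticAt _
  have h2 : AnalyticAt ℝ (fun y : ℝ => (Complex.sin ((Complex.ofRealCLM : ℝ →L[ℝ] ℂ) y)).re) x := by
    exact (Complex.reCLM.analyticAt _).comp ((h1.restrictScalars).comp (Complex.ofRealCLM.analyticAt x))
  have : Real.sin = fun y : ℝ => (Complex.sin ((Complex.ofRealCLM : ℝ →L[ℝ] ℂ) y)).re := by
    funext y; simp [Complex.sin_ofReal_re]
  rw [this]; exact h2

/-- Factorization of an analytic function with vanishing derivatives. -/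
lemma factor_iterate (f : ℝ → ℝ) (a : ℝ) (N : ℕ) (hf : AnalyticAt ℝ f a)
    (hv : ∀ m ≤ N, iteratedDeriv m f a = 0) :
    AnalyticAt ℝ ((Function.swap dslope a)^[N + 1] f) a ∧
      ∀ x, f x = (x - a) ^ (N + 1) * (Function.swap dslope a)^[N + 1] f x := by
  obtain ⟨p, hp⟩ := hf
  have hcoeff : ∀ k ≤ N, p.coeff k = 0 := by
    intro k hk
    obtain ⟨r, hr⟩ := hp
    have hfs := hr.factorial_smul (1 : ℝ) k
    have h1 : iteratedDeriv k f a = iteratedFDeriv ℝ k f a (fun _ => (1 : ℝ)) :=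
      iteratedDeriv_eq_iteratedFDeriv
    have h2 : p.coeff k = p k (fun _ => (1 : ℝ)) := rfl
    have h3 : (k.factorial : ℝ) * p.coeff k = 0 := by
      rw [h2]
      have := hfs
      rw [← h1, hv k hk] at this
      simpa [nsmul_eq_mul] using this
    have hne : (k.factorial : ℝ) ≠ 0 := Nat.cast_ne_zero.mpr k.factorial_ne_zero
    exact (mul_eq_zero.mp h3).resolve_left hne
  have hval : ∀ k ≤ N, ((Function.swap dslope a)^[k] f) a = 0 := by
    intro k hk
    have hk' := hp.has_fpower_series_iterate_dslope_fslope k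
    have := hk'.coeff_zero (fun _ => (1 : ℝ))
    have hc : (FormalMultilinearSeries.fslope^[k] p).coeff 0 = p.coeff k := by
      rw [FormalMultilinearSeries.coeff_iterate_fslope, zero_add]
    rw [← this]
    have : (FormalMultilinearSeries.fslope^[k] p) 0 (fun _ => (1:ℝ)) =
        (FormalMultilinearSeries.fslope^[k] p).coeff 0 := rfl
    rw [this, hc, hcoeff k hk]
  constructor
  · exact ⟨_, hp.has_fpower_series_iterate_dslope_fslope (N + 1)⟩
  · have key : ∀ j ≤ N + 1, ∀ x, f x = (x - a) ^ j * (Function.swap dslope a)^[j] f x := by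
      intro j
      induction j with
      | zero => intro _ x; simp
      | succ j ih =>
        intro hj x
        have hih := ih (Nat.le_of_succ_le hj) x
        have hzero : ((Function.swap dslope a)^[j] f) a = 0 :=
          hval j (Nat.lt_succ_iff.mp hj)
        have hstep : ((Function.swap dslope a)^[j] f) x =
            (x - a) * ((Function.swap dslope a)^[j+1] f) x := by
          rw [Function.iterate_succ_apply']
          have := sub_smul_dslope ((Function.swap dslope a)^[j] f) a x
          rw [hzero, sub_zero] at this
          rw [Function.swap]
          rw [← this]; simp [smul_eq_mul]
        rw [hih, hstep]; ring
    exact key (N + 1) le_rfl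



/-- Let `ψ : ℝ → ℝ` be real-analytic and `2π`-periodic, let `t₀ ∈ ℝ` and
`M ≥ 0` an integer, and suppose `ψ⁽ᵐ⁾(t₀) = 0` for `m = 0, …, M`. Then there exists a
real-analytic function `d : ℝ → ℝ` with `d(τ + 2π) = (−1)^(M+1) d(τ)` for all `τ`, such that
`ψ(τ) = sin^(M+1)((t₀ − τ)/2) · d(τ)` for all `τ ∈ ℝ`. -/
theorem stmt_2
    (ψ : ℝ → ℝ)
    (hψ_an : ∀ τ, AnalyticAt ℝ ψ τ)
    (hψ_per : Function.Periodic ψ (2 * Real.pi))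
    (t₀ : ℝ) (M : ℕ)
    (hvan : ∀ m ≤ M, iteratedDeriv m ψ t₀ = 0) :
    ∃ d : ℝ → ℝ,
      (∀ τ, AnalyticAt ℝ d τ) ∧
      (∀ τ, d (τ + 2 * Real.pi) = (-1) ^ (M + 1) * d τ) ∧
      (∀ τ, ψ τ = Real.sin ((t₀ - τ) / 2) ^ (M + 1) * d τ) := by
  classical
  set π := Real.pi with hπ
  set s : ℝ → ℝ := fun τ => Real.sin ((t₀ - τ) / 2) with hs_def
  have hs_an : ∀ τ, AnalyticAt ℝ s τ := by
    intro τ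
    exact (analyticAt_realSin _).comp
      (((analyticAt_const.sub analyticAt_id).div analyticAt_const (by norm_num)))
  -- vanishing of all derivatives up to M at every zero of s
  have hZ_van : ∀ a, s a = 0 → ∀ m ≤ M, iteratedDeriv m ψ a = 0 := by
    intro a ha m hm
    obtain ⟨n, hn⟩ := Real.sin_eq_zero_iff.mp ha
    have haeq : t₀ = a + (n : ℝ) * (2 * π) := by
      have : (n : ℝ) * π = (t₀ - a) / 2 := hn
      field_simp at this
      linarith
    have hper : Function.Periodic ψ ((n : ℝ) * (2 * π)) := hψ_per.int_mul n
    have hfun : (fun x => ψ (x + (n : ℝ) * (2 * π))) = ψ := funext fun x => hper x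
    have := iteratedDeriv_comp_add_const m ψ ((n : ℝ) * (2 * π))
    rw [hfun] at this
    have h2 := congrFun this a
    rw [h2, ← haeq]
    exact hvan m hm
  set Q : ℝ → ℝ := fun τ => ψ τ / s τ ^ (M + 1) with hQ_def
  set d : ℝ → ℝ := fun τ => if s τ = 0 then limUnder (𝓝[≠] τ) Q else Q τ with hd_def
  -- d agrees with Q wherever s ≠ 0
  have hdQ : ∀ τ, s τ ≠ 0 → d τ = Q τ := fun τ hτ => if_neg hτ
  -- local analyticity
  have hloc : ∀ a, ∃ q : ℝ → ℝ, AnalyticAt ℝ q a ∧ d =ᶠ[nhds a] q := by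
    intro a
    by_cases ha : s a = 0
    · obtain ⟨hg_an, hg_eq⟩ := factor_iterate ψ a M (hψ_an a) (hZ_van a ha)
      set g := (Function.swap dslope a)^[M + 1] ψ with hg
      obtain ⟨hh_an, hh_eq⟩ := factor_iterate s a 0 (hs_an a)
        (by intro m hm; interval_cases m; simpa using ha)
      set h := (Function.swap dslope a)^[0 + 1] s with hh
      have hh_eq' : ∀ x, s x = (x - a) * h x := by
        intro x; have := hh_eq x; simpa using this
      -- h a = deriv s a ≠ 0
      have hderiv : HasDerivAt s (Real.cos ((t₀ - a) / 2) * (-1 / 2)) a := by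
        have hi : HasDerivAt (fun x : ℝ => (t₀ - x) / 2) (-1 / 2) a := by
          simpa using ((hasDerivAt_id a).const_sub t₀).div_const 2
        exact (Real.hasDerivAt_sin ((t₀ - a) / 2)).comp a hi
      have hcos : Real.cos ((t₀ - a) / 2) ≠ 0 := by
        intro h0
        have := Real.sin_sq_add_cos_sq ((t₀ - a) / 2)
        rw [h0] at this
        have hsa : Real.sin ((t₀ - a) / 2) = 0 := ha
        rw [hsa] at this; norm_num at this
      have hha : h a ≠ 0 := by
        have : h a = deriv s a := by
          rw [hh]; simp [Function.iterate_one, Function.swap, dslope_same]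
        rw [this, hderiv.deriv]
        intro h0
        rcases mul_eq_zero.mp h0 with h1 | h1
        · exact hcos h1
        · norm_num at h1
      set q : ℝ → ℝ := fun x => g x / h x ^ (M + 1) with hq
      have hq_an : AnalyticAt ℝ q a := hg_an.div (hh_an.pow (M + 1)) (pow_ne_zero _ hha)
      have hh_ne : ∀ᶠ x in nhds a, h x ≠ 0 := hh_an.continuousAt.eventually_ne hha
      have hQq : ∀ x, h x ≠ 0 → x ≠ a → Q x = q x := by
        intro x hhx hxa
        have hxa' : x - a ≠ 0 := sub_ne_zero.mpr hxa
        rw [hQ_def]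
        simp only
        rw [hg_eq x, hh_eq' x, hq]
        simp only
        rw [mul_pow]
        field_simp
      have htend : Tendsto Q (𝓝[≠] a) (nhds (q a)) := by
        have h1 : Tendsto q (𝓝[≠] a) (nhds (q a)) :=
          hq_an.continuousAt.continuousWithinAt.tendsto
        refine h1.congr' ?_
        have := hh_ne.filter_mono (nhdsWithin_le_nhds (s := {a}ᶜ))
        filter_upwards [this, self_mem_nhdsWithin] with x hx1 hx2
        exact (hQq x hx1 hx2).symm
      have hda : d a = q a := by
        rw [hd_def]; simp only [if_pos ha]
        exact htend.limUnder_eq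
      refine ⟨q, hq_an, ?_⟩
      filter_upwards [hh_ne] with x hx
      by_cases hxa : x = a
      · rw [hxa]; exact hda
      · have hsx : s x ≠ 0 := by
          rw [hh_eq' x]
          exact mul_ne_zero (sub_ne_zero.mpr hxa) hx
        rw [hdQ x hsx]
        exact hQq x hx hxa
    · refine ⟨Q, (hψ_an a).div ((hs_an a).pow (M + 1)) (pow_ne_zero _ ha), ?_⟩
      filter_upwards [(hs_an a).continuousAt.eventually_ne ha] with x hx
      exact hdQ x hx
  have hd_an : ∀ τ, AnalyticAt ℝ d τ := by
    intro τ
    obtain ⟨q, hq, he⟩ := hloc τ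
    exact hq.congr he.symm
  have hd_cont : Continuous d :=
    continuous_iff_continuousAt.mpr fun τ => (hd_an τ).continuousAt
  refine ⟨d, hd_an, ?_, ?_⟩
  · -- periodicity identity by density
    have hs_shift : ∀ τ, s (τ + 2 * π) = -s τ := by
      intro τ
      have : (t₀ - (τ + 2 * π)) / 2 = (t₀ - τ) / 2 - π := by ring
      rw [hs_def]; simp only
      rw [this, Real.sin_sub_pi]
    have heq : (fun τ => d (τ + 2 * π)) = fun τ => (-1) ^ (M + 1) * d τ := by
      have hZc : Dense {τ : ℝ | s τ ≠ 0} := by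
        have hsub : {τ : ℝ | s τ = 0} ⊆ Set.range (fun n : ℤ => t₀ - 2 * n * π) := by
          intro τ hτ
          obtain ⟨n, hn⟩ := Real.sin_eq_zero_iff.mp hτ
          refine ⟨n, ?_⟩
          have : (n : ℝ) * π = (t₀ - τ) / 2 := hn
          field_simp at this ⊢
          linarith
        have hcnt : Set.Countable {τ : ℝ | s τ = 0} :=
          (Set.countable_range _).mono hsub
        have := hcnt.dense_compl ℝ
        convert this using 1
        rfl
      refine Continuous.ext_on hZc (hd_cont.comp (by continuity)) (continuous_const.mul hd_cont) ?_
      intro τ hτ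
      have hτ' : s τ ≠ 0 := hτ
      have hτ2 : s (τ + 2 * π) ≠ 0 := by rw [hs_shift]; exact neg_ne_zero.mpr hτ'
      have hψp : ψ (τ + 2 * π) = ψ τ := hψ_per τ
      simp only
      rw [hdQ _ hτ2, hdQ _ hτ', hQ_def]
      simp only
      rw [hψp, hs_shift, neg_pow]
      rcases neg_one_pow_eq_or ℝ (M + 1) with hpm | hpm <;> rw [hpm]
      · simp
      · rw [neg_one_mul, div_neg, neg_one_mul]
    intro τ
    exact congrFun heq τ
  · intro τ
    by_cases hτ : s τ = 0
    · have : ψ τ = 0 := by simpa using hZ_van τ hτ 0 (Nat.zero_le M)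
      rw [this]
      have : Real.sin ((t₀ - τ) / 2) = 0 := hτ
      rw [this]
      simp
    · rw [hdQ τ hτ, hQ_def]
      have : Real.sin ((t₀ - τ) / 2) = s τ := rfl
      rw [this]
      field_simp
end

section
/- Fix t ∈ ℝ, let M ≥ 0 be an integer, and let ψ : ℝ → ℝ be real-analytic and 2π-periodic with ψ⁽ᵐ⁾(t) = 0 for m = 0, …, M. Define R : ℝ → ℝ by R(τ) = log(|x(t) − x(τ)|) · ψ(τ) for τ ∉ t + 2πℤ and R(τ) = 0 for τ ∈ t + 2πℤ. Then R is 2π-periodic and M-times continuously differentiable on ℝ, and the (M+1)-th derivative of R, which exists at every τ ∉ t + 2πℤ, is Lebesgue integrable on [0, 2π]. -/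
open Real Set Filter MeasureTheory Topology



lemma cont_pow_log (k : ℕ) : Continuous (fun s : ℝ => s ^ (k + 1) * Real.log s) := by
  have : (fun s : ℝ => s ^ (k + 1) * Real.log s) = fun s => s ^ k * (s * Real.log s) := by
    ext s; ring
  rw [this]
  exact (continuous_pow k).mul Real.continuous_mul_log

lemma hasDeriv_pow_log (k : ℕ) (s : ℝ) :
    HasDerivAt (fun s : ℝ => s ^ (k + 2) * Real.log s)
      ((k + 2) * s ^ (k + 1) * Real.log s + s ^ (k + 1)) s := by
  rcases eq_or_ne s 0 with rfl | hs
  · have h0 : ((k:ℝ) + 2) * 0 ^ (k + 1) * Real.log 0 + 0 ^ (k + 1) = 0 := by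
      simp [zero_pow (Nat.succ_ne_zero k)]
    rw [h0, hasDerivAt_iff_tendsto_slope]
    have hc : Tendsto (fun y : ℝ => y ^ (k + 1) * Real.log y) (𝓝[≠] 0) (𝓝 0) := by
      have := ((cont_pow_log k).tendsto 0)
      simp only [zero_pow (Nat.succ_ne_zero k), zero_mul] at this
      exact this.mono_left nhdsWithin_le_nhds
    refine hc.congr' ?_
    filter_upwards [self_mem_nhdsWithin] with y hy
    have hy' : y ≠ 0 := hy
    simp only [slope_def_field]
    field_simp
    ring
  · have h : HasDerivAt (fun s : ℝ => s ^ (k + 2) * Real.log s) _ s := (hasDerivAt_pow (k + 2) s).fun_mul (Real.hasDerivAt_log hs)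
    convert h using 1
    simp only [show k + 2 - 1 = k + 1 from rfl, Nat.cast_add, Nat.cast_ofNat]
    field_simp
    ring




lemma contDiff_pow_log (k : ℕ) : ContDiff ℝ (k : ℕ∞) (fun s : ℝ => s ^ (k + 1) * Real.log s) := by
  induction k with
  | zero =>
      have : ((0 : ℕ) : ℕ∞) = 0 := rfl
      rw [this]
      exact contDiff_zero.mpr (cont_pow_log 0)
  | succ n ih =>
      have hcast : (((n + 1 : ℕ) : ℕ∞) : WithTop ℕ∞) = ((n : ℕ∞) : WithTop ℕ∞) + 1 := by
        norm_cast
      rw [hcast, contDiff_succ_iff_deriv]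
      refine ⟨fun s => (hasDeriv_pow_log n s).differentiableAt, by simp, ?_⟩
      have hderiv : deriv (fun s : ℝ => s ^ (n + 2) * Real.log s)
          = fun s => ((n : ℝ) + 2) * (s ^ (n + 1) * Real.log s) + s ^ (n + 1) := by
        funext s
        rw [(hasDeriv_pow_log n s).deriv]
        ring
      rw [hderiv]
      exact (contDiff_const.mul ih).add (contDiff_id.pow (n + 1))



lemma integrableOn_log_Ioc01 : IntegrableOn Real.log (Ioc (0:ℝ) 1) := by
  have hg : ∀ x ∈ Ioo (0:ℝ) 1, HasDerivAt (fun x : ℝ => x - x * Real.log x) (-Real.log x) x := by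
    intro x hx
    have h1 : HasDerivAt (fun x : ℝ => x * Real.log x) (1 * Real.log x + x * x⁻¹) x :=
      (hasDerivAt_id x).mul (Real.hasDerivAt_log hx.1.ne')
    have : HasDerivAt (fun x : ℝ => x - x * Real.log x) _ x := (hasDerivAt_id x).fun_sub h1
    convert this using 1
    rw [mul_inv_cancel₀ hx.1.ne.symm]
    ring
  have hcont : ContinuousOn (fun x : ℝ => x - x * Real.log x) (Icc 0 1) :=
    (continuous_id.sub Real.continuous_mul_log).continuousOn
  have hpos : ∀ x ∈ Ioo (0:ℝ) 1, 0 ≤ -Real.log x := by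
    intro x hx
    simpa using Real.log_nonpos hx.1.le hx.2.le
  have h := (intervalIntegral.integrableOn_deriv_of_nonneg hcont hg hpos).neg
  have : IntegrableOn (fun x => -(-Real.log x)) _ volume := h
  simpa using this

lemma integrableOn_log_Iocneg : IntegrableOn Real.log (Ioc (-1:ℝ) 0) := by
  have hg : ∀ x ∈ Ioo (-1:ℝ) 0, HasDerivAt (fun x : ℝ => x - x * Real.log x) (-Real.log x) x := by
    intro x hx
    have h1 : HasDerivAt (fun x : ℝ => x * Real.log x) (1 * Real.log x + x * x⁻¹) x :=
      (hasDerivAt_id x).mul (Real.hasDerivAt_log hx.2.ne)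
    have : HasDerivAt (fun x : ℝ => x - x * Real.log x) _ x := (hasDerivAt_id x).fun_sub h1
    convert this using 1
    rw [mul_inv_cancel₀ hx.2.ne]
    ring
  have hcont : ContinuousOn (fun x : ℝ => x - x * Real.log x) (Icc (-1) 0) :=
    (continuous_id.sub Real.continuous_mul_log).continuousOn
  have hpos : ∀ x ∈ Ioo (-1:ℝ) 0, 0 ≤ -Real.log x := by
    intro x hx
    rw [← Real.log_abs]
    have : |x| ≤ 1 := by rw [abs_le]; constructor <;> linarith [hx.1.le, hx.2.le]
    simpa using Real.log_nonpos (abs_nonneg x) this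
  have h := (intervalIntegral.integrableOn_deriv_of_nonneg hcont hg hpos).neg
  have : IntegrableOn (fun x => -(-Real.log x)) _ volume := h
  simpa using this

lemma integrableOn_log_Icc (a b : ℝ) : IntegrableOn Real.log (Icc a b) := by
  set D : ℝ := max 1 (max |a| |b|) with hD
  have hD1 : (1:ℝ) ≤ D := le_max_left _ _
  have hsub : Icc a b ⊆ (Icc (-D) (-1) ∪ Ioc (-1) 0) ∪ (Ioc 0 1 ∪ Icc 1 D) := by
    intro x hx
    have hxa : |x| ≤ D := by
      rcases abs_le.mp (le_refl |x|) with _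
      have : |x| ≤ max |a| |b| := abs_le.mpr ⟨by
        have := hx.1; have := neg_abs_le a; linarith [le_max_left |a| |b|],
        by have := hx.2; have := le_abs_self b; linarith [le_max_right |a| |b|]⟩
      exact this.trans (le_max_right _ _)
    have h1 : -D ≤ x := by have := neg_abs_le x; linarith [abs_le.mp hxa]
    have h2 : x ≤ D := by linarith [le_abs_self x, hxa]
    rcases le_or_gt x (-1) with h | h
    · exact Or.inl (Or.inl ⟨h1, h⟩)
    rcases le_or_gt x 0 with h' | h'
    · exact Or.inl (Or.inr ⟨h, h'⟩)
    rcases le_or_gt x 1 with h'' | h''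
    · exact Or.inr (Or.inl ⟨h', h''⟩)
    · exact Or.inr (Or.inr ⟨h''.le, h2⟩)
  refine IntegrableOn.mono_set ?_ hsub
  have hc1 : IntegrableOn Real.log (Icc (-D) (-1)) := by
    refine (Real.continuousOn_log.mono ?_).integrableOn_compact isCompact_Icc
    intro x hx; simp only [mem_compl_iff, mem_singleton_iff]
    intro h; rw [h] at hx; have := hx.2; linarith
  have hc2 : IntegrableOn Real.log (Icc 1 D) := by
    refine (Real.continuousOn_log.mono ?_).integrableOn_compact isCompact_Icc
    intro x hx; simp only [mem_compl_iff, mem_singleton_iff]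
    intro h; rw [h] at hx; have := hx.1; linarith
  exact ((hc1.union integrableOn_log_Iocneg).union (integrableOn_log_Ioc01.union hc2))

lemma integrableOn_log_shift (c a b : ℝ) :
    IntegrableOn (fun τ => Real.log (τ - c)) (Icc a b) := by
  rcases le_or_gt a b with h | h
  · have h1 : IntervalIntegrable Real.log volume (a - c) (b - c) := by
      rw [intervalIntegrable_iff_integrableOn_Icc_of_le (by linarith)]
      exact integrableOn_log_Icc _ _
    have h2 := h1.comp_sub_right c
    rw [intervalIntegrable_iff_integrableOn_Icc_of_le (by linarith)] at h2
    simpa using h2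
  · rw [Icc_eq_empty (by linarith)]
    exact integrableOn_empty



lemma periodic_deriv' {f : ℝ → ℝ} {c : ℝ} (h : Function.Periodic f c) :
    Function.Periodic (deriv f) c := by
  intro x
  have hfun : (fun y => f (y + c)) = f := funext h
  calc deriv f (x + c) = deriv (fun y => f (y + c)) x := (deriv_comp_add_const f c x).symm
    _ = deriv f x := by rw [hfun]

lemma periodic_iteratedDeriv {f : ℝ → ℝ} {c : ℝ} (h : Function.Periodic f c) (n : ℕ) :
    Function.Periodic (iteratedDeriv n f) c := by
  induction n with
  | zero => simpa [iteratedDeriv_zero] using h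
  | succ n ih => rw [iteratedDeriv_succ]; exact periodic_deriv' ih

lemma contDiffOn_iteratedDeriv' {f : ℝ → ℝ} {W : Set ℝ} (hW : IsOpen W)
    (hf : ContDiffOn ℝ ((⊤ : ℕ∞) : WithTop ℕ∞) f W) (n : ℕ) :
    ContDiffOn ℝ ((⊤ : ℕ∞) : WithTop ℕ∞) (iteratedDeriv n f) W := by
  induction n with
  | zero => simpa [iteratedDeriv_zero] using hf
  | succ n ih =>
      rw [iteratedDeriv_succ]
      exact ih.deriv_of_isOpen hW (by exact_mod_cast le_top)

lemma iteratedDeriv_pow_mul (τ₀ : ℝ) :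
    ∀ (n : ℕ) (g : ℝ → ℝ), AnalyticAt ℝ g τ₀ →
      iteratedDeriv n (fun τ => (τ - τ₀) ^ n * g τ) τ₀ = n.factorial * g τ₀ := by
  intro n
  induction n with
  | zero => intro g hg; simp [iteratedDeriv_zero]
  | succ n ih =>
      intro g hg
      obtain ⟨U, hUW, hUopen, hτ₀U⟩ := mem_nhds_iff.mp hg.eventually_analyticAt
      have hder : ∀ τ ∈ U, HasDerivAt g (deriv g τ) τ := fun τ hτ =>
        ((hUW hτ).differentiableAt).hasDerivAt
      have hEv : deriv (fun τ => (τ - τ₀) ^ (n + 1) * g τ)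
          =ᶠ[𝓝 τ₀] (fun τ => (τ - τ₀) ^ n * (((n : ℝ) + 1) * g τ + (τ - τ₀) * deriv g τ)) := by
        filter_upwards [hUopen.mem_nhds hτ₀U] with τ hτ
        have h1 : HasDerivAt (fun τ : ℝ => (τ - τ₀) ^ (n + 1)) (((n:ℝ) + 1) * (τ - τ₀) ^ n) τ := by
          have := ((hasDerivAt_id τ).sub_const τ₀).fun_pow (n + 1)
          simpa using this
        have h2 := h1.fun_mul (hder τ hτ)
        rw [h2.deriv]
        ring
      rw [iteratedDeriv_succ', hEv.iteratedDeriv_eq n]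
      have hg' : AnalyticAt ℝ (fun τ => ((n : ℝ) + 1) * g τ + (τ - τ₀) * deriv g τ) τ₀ := by
        have hdg : AnalyticAt ℝ (deriv g) τ₀ := by
          have : AnalyticOnNhd ℝ g U := fun τ hτ => hUW hτ
          exact this.deriv τ₀ hτ₀U
        exact (analyticAt_const.mul hg).add ((analyticAt_id.sub analyticAt_const).mul hdg)
      rw [ih _ hg']
      simp [Nat.factorial_succ]
      ring

lemma periodic_eval {E : Type*} (f : ℝ → E) (c : ℝ) (hf : Function.Periodic f c) (k : ℤ)
    (y : ℝ) : f (y + c * k) = f y := by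
  have := (hf.int_mul k) y
  rwa [mul_comm ((k : ℝ)) c] at this




/-- Fix `t ∈ ℝ`, let `M ≥ 0` be an integer, and let `ψ : ℝ → ℝ` be
real-analytic and `2π`-periodic with `ψ⁽ᵐ⁾(t) = 0` for `m = 0, …, M`. Define `R : ℝ → ℝ` by
`R(τ) = log(‖x(t) − x(τ)‖) ψ(τ)` for `τ ∉ t + 2πℤ` and `R(τ) = 0` for `τ ∈ t + 2πℤ`. Then
`R` is `2π`-periodic and `M`-times continuously differentiable on `ℝ`, and the `(M+1)`-th
derivative of `R`, which exists at every `τ ∉ t + 2πℤ`, is Lebesgue integrable on `[0, 2π]`. -/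
theorem stmt_5
    (x : ℝ → EuclideanSpace ℝ (Fin 2))
    (hx_an : ∀ t, AnalyticAt ℝ x t)
    (hx_per : Function.Periodic x (2 * Real.pi))
    (hx_reg : ∀ t, deriv x t ≠ 0)
    (hx_inj : Set.InjOn x (Set.Ico 0 (2 * Real.pi)))
    (t : ℝ) (M : ℕ) (ψ : ℝ → ℝ)
    (hψ_an : ∀ τ, AnalyticAt ℝ ψ τ)
    (hψ_per : Function.Periodic ψ (2 * Real.pi))
    (hvan : ∀ m ≤ M, iteratedDeriv m ψ t = 0)
    (R : ℝ → ℝ)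
    (hR_off : ∀ τ, (¬ ∃ k : ℤ, τ = t + 2 * Real.pi * k) →
      R τ = Real.log ‖x t - x τ‖ * ψ τ)
    (hR_on : ∀ τ, (∃ k : ℤ, τ = t + 2 * Real.pi * k) → R τ = 0) :
    Function.Periodic R (2 * Real.pi) ∧
    ContDiff ℝ (M : ℕ∞) R ∧
    (∀ τ, (¬ ∃ k : ℤ, τ = t + 2 * Real.pi * k) →
      DifferentiableAt ℝ (iteratedDeriv M R) τ) ∧
    MeasureTheory.IntegrableOn (iteratedDeriv (M + 1) R) (Set.Icc 0 (2 * Real.pi)) := by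
  have two_pi_pos : (0 : ℝ) < 2 * Real.pi := by positivity
  -- the lattice set and its complement
  have hPset : {τ : ℝ | ∃ k : ℤ, τ = t + 2 * Real.pi * k}
      = (fun τ : ℝ => (τ - t) / (2 * Real.pi)) ⁻¹' (Set.range ((↑) : ℤ → ℝ)) := by
    ext τ
    simp only [mem_setOf_eq, mem_preimage, mem_range]
    constructor
    · rintro ⟨k, rfl⟩
      exact ⟨k, by field_simp; ring⟩
    · rintro ⟨k, hk⟩
      refine ⟨k, ?_⟩
      field_simp at hk
      linarith
  have hPclosed : IsClosed {τ : ℝ | ∃ k : ℤ, τ = t + 2 * Real.pi * k} := by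
    rw [hPset]
    exact IsClosed.preimage ((continuous_id.sub continuous_const).div_const _)
      Int.isClosedEmbedding_coe_real.isClosed_range
  have hVopen : IsOpen {τ : ℝ | ¬ ∃ k : ℤ, τ = t + 2 * Real.pi * k} :=
    isOpen_compl_iff.mpr hPclosed
  have hvan' : ∀ τ₀, (∃ k : ℤ, τ₀ = t + 2 * Real.pi * k) → ∀ m ≤ M,
      iteratedDeriv m ψ τ₀ = 0 := by
    rintro τ₀ ⟨k, rfl⟩ m hm
    rw [periodic_eval _ _ (periodic_iteratedDeriv hψ_per m) k t]
    exact hvan m hm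
  have hx_lat : ∀ τ₀, (∃ k : ℤ, τ₀ = t + 2 * Real.pi * k) → x τ₀ = x t := by
    rintro τ₀ ⟨k, rfl⟩
    exact periodic_eval x _ hx_per k t
  have hspacing : ∀ τ₀ τ, (∃ k : ℤ, τ₀ = t + 2 * Real.pi * k) →
      (∃ k : ℤ, τ = t + 2 * Real.pi * k) → τ ≠ τ₀ → 2 * Real.pi ≤ |τ - τ₀| := by
    rintro τ₀ τ ⟨k0, rfl⟩ ⟨k, rfl⟩ hne
    have hkk : k ≠ k0 := by rintro rfl; exact hne rfl
    have h1 : t + 2 * Real.pi * k - (t + 2 * Real.pi * k0) = 2 * Real.pi * ((k : ℝ) - k0) := by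
      ring
    rw [h1, abs_mul, abs_of_pos two_pi_pos]
    have h2 : (1 : ℝ) ≤ |(k : ℝ) - (k0 : ℝ)| := by
      have : (1 : ℤ) ≤ |k - k0| := Int.one_le_abs (sub_ne_zero.2 hkk)
      calc (1:ℝ) = ((1:ℤ):ℝ) := by norm_num
        _ ≤ ((|k - k0| : ℤ) : ℝ) := by exact_mod_cast this
        _ = |(k : ℝ) - (k0 : ℝ)| := by rw [Int.cast_abs]; push_cast; rfl
    nlinarith
  have hoff_ne : ∀ τ, (¬ ∃ k : ℤ, τ = t + 2 * Real.pi * k) → x t - x τ ≠ 0 := by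
    intro τ hτ hzero
    have hxx : x τ = x t := (sub_eq_zero.mp hzero).symm
    set u := toIcoMod two_pi_pos 0 t with hu_def
    set v := toIcoMod two_pi_pos 0 τ with hv_def
    have hu : u ∈ Ico (0:ℝ) (2 * Real.pi) := by
      simpa using toIcoMod_mem_Ico' two_pi_pos t
    have hv : v ∈ Ico (0:ℝ) (2 * Real.pi) := by
      simpa using toIcoMod_mem_Ico' two_pi_pos τ
    have hut : t - u = (toIcoDiv two_pi_pos 0 t : ℤ) * (2 * Real.pi) := by
      rw [hu_def, self_sub_toIcoMod, zsmul_eq_mul]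
    have hvt : τ - v = (toIcoDiv two_pi_pos 0 τ : ℤ) * (2 * Real.pi) := by
      rw [hv_def, self_sub_toIcoMod, zsmul_eq_mul]
    have hxu : x u = x t := by
      have h := hx_per.sub_int_mul_eq (x := t) (toIcoDiv two_pi_pos 0 t)
      rw [show u = t - (toIcoDiv two_pi_pos 0 t : ℤ) * (2 * Real.pi) from by linarith]
      exact h
    have hxv : x v = x τ := by
      have h := hx_per.sub_int_mul_eq (x := τ) (toIcoDiv two_pi_pos 0 τ)
      rw [show v = τ - (toIcoDiv two_pi_pos 0 τ : ℤ) * (2 * Real.pi) from by linarith]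
      exact h
    have huv : u = v := hx_inj hu hv (by rw [hxu, hxv, hxx])
    apply hτ
    refine ⟨toIcoDiv two_pi_pos 0 τ - toIcoDiv two_pi_pos 0 t, ?_⟩
    push_cast
    have := hut
    have := hvt
    have h3 : τ - u = (toIcoDiv two_pi_pos 0 τ : ℝ) * (2 * Real.pi) := by rw [huv]; exact_mod_cast hvt
    nlinarith [hut, h3]
  -- smoothness off the lattice
  have hA : ∀ τ, (¬ ∃ k : ℤ, τ = t + 2 * Real.pi * k) →
      ContDiffAt ℝ ((⊤ : ℕ∞) : WithTop ℕ∞) (fun τ => Real.log ‖x t - x τ‖ * ψ τ) τ := by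
    intro τ hτ
    have h1 : ContDiffAt ℝ ((⊤ : ℕ∞) : WithTop ℕ∞) (fun τ => x t - x τ) τ :=
      (analyticAt_const.sub (hx_an τ)).contDiffAt
    have h2 := h1.norm ℝ (hoff_ne τ hτ)
    have h3 := h2.log (norm_ne_zero_iff.2 (hoff_ne τ hτ))
    exact h3.mul (hψ_an τ).contDiffAt
  have hRA : ∀ τ, (¬ ∃ k : ℤ, τ = t + 2 * Real.pi * k) →
      R =ᶠ[𝓝 τ] (fun τ => Real.log ‖x t - x τ‖ * ψ τ) := by
    intro τ hτ
    filter_upwards [hVopen.mem_nhds hτ] with y hy using hR_off y hy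
  have hAV : ContDiffOn ℝ ((⊤ : ℕ∞) : WithTop ℕ∞) (fun τ => Real.log ‖x t - x τ‖ * ψ τ)
      {τ : ℝ | ¬ ∃ k : ℤ, τ = t + 2 * Real.pi * k} :=
    fun y hy => (hA y hy).contDiffWithinAt
  have hiterEq : ∀ (n : ℕ) τ, (¬ ∃ k : ℤ, τ = t + 2 * Real.pi * k) →
      iteratedDeriv n R τ = iteratedDeriv n (fun τ => Real.log ‖x t - x τ‖ * ψ τ) τ :=
    fun n τ hτ => (hRA τ hτ).iteratedDeriv_eq n
  -- main analysis at a lattice point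
  have lattice_main : ∀ τ₀, (∃ k : ℤ, τ₀ = t + 2 * Real.pi * k) →
      ContDiffAt ℝ (M : ℕ∞) R τ₀ ∧
      ∃ ε > 0, IntegrableOn (iteratedDeriv (M + 1) R) (Icc (τ₀ - ε) (τ₀ + ε)) := by
    intro τ₀ hPτ₀
    have hψτ₀ : ψ τ₀ = 0 := by
      have := hvan' τ₀ hPτ₀ 0 (Nat.zero_le M)
      simpa [iteratedDeriv_zero] using this
    have hf_an : AnalyticAt ℝ (fun τ => x t - x τ) τ₀ := analyticAt_const.sub (hx_an τ₀)
    have hf0 : x t - x τ₀ = 0 := sub_eq_zero.2 (hx_lat τ₀ hPτ₀).symm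
    have hfne : ¬ ∀ᶠ τ in 𝓝 τ₀, x t - x τ = 0 := by
      intro h
      have hxev : x =ᶠ[𝓝 τ₀] (fun _ => x t) := h.mono fun y hy => (sub_eq_zero.mp hy).symm
      have : deriv x τ₀ = 0 := by rw [hxev.deriv_eq]; exact deriv_const _ _
      exact hx_reg τ₀ this
    have horder : analyticOrderAt (fun τ => x t - x τ) τ₀ ≠ ⊤ := fun h => hfne (analyticOrderAt_eq_top.mp h)
    obtain ⟨n, hn⟩ := WithTop.ne_top_iff_exists.mp horder
    obtain ⟨g, hg_an, hg0, hfg⟩ := (hf_an.analyticOrderAt_eq_natCast (n := n)).mp hn.symm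
    have hn1 : 1 ≤ n := by
      by_contra h
      have hn0 : n = 0 := by omega
      have := hfg.self_of_nhds
      rw [hn0, pow_zero, one_smul, hf0] at this
      exact hg0 this.symm
    -- factor ψ
    obtain ⟨φ, hφ_an, hψφ⟩ : ∃ φ : ℝ → ℝ, AnalyticAt ℝ φ τ₀ ∧
        ∀ᶠ τ in 𝓝 τ₀, ψ τ = (τ - τ₀) ^ (M + 1) * φ τ := by
      by_cases hψtop : analyticOrderAt ψ τ₀ = ⊤
      · refine ⟨fun _ => 0, analyticAt_const, ?_⟩
        filter_upwards [analyticOrderAt_eq_top.mp hψtop] with τ hτ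
        simp [hτ]
      · obtain ⟨m, hm⟩ := WithTop.ne_top_iff_exists.mp hψtop
        obtain ⟨gψ, hgψ_an, hgψ0, hfgψ⟩ := ((hψ_an τ₀).analyticOrderAt_eq_natCast (n := m)).mp hm.symm
        have hmM : M + 1 ≤ m := by
          by_contra h
          have hEv : ψ =ᶠ[𝓝 τ₀] fun τ => (τ - τ₀) ^ m * gψ τ :=
            hfgψ.mono fun τ h => by rw [h, smul_eq_mul]
          have hiter : iteratedDeriv m ψ τ₀ = m.factorial * gψ τ₀ := by
            rw [hEv.iteratedDeriv_eq m, iteratedDeriv_pow_mul τ₀ m gψ hgψ_an]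
          rw [hvan' τ₀ hPτ₀ m (by omega)] at hiter
          have hfac : (m.factorial : ℝ) ≠ 0 := Nat.cast_ne_zero.2 m.factorial_ne_zero
          exact hgψ0 ((mul_eq_zero.mp hiter.symm).resolve_left hfac)
        refine ⟨fun τ => (τ - τ₀) ^ (m - (M + 1)) * gψ τ,
          ((analyticAt_id.sub analyticAt_const).pow _).mul hgψ_an, ?_⟩
        filter_upwards [hfgψ] with τ hτ
        rw [hτ, smul_eq_mul, ← mul_assoc, ← pow_add]
        congr 2
        omega
    -- choose a good open neighbourhood U
    have hgev : ∀ᶠ τ in 𝓝 τ₀, AnalyticAt ℝ g τ := hg_an.eventually_analyticAt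
    have hgne : ∀ᶠ τ in 𝓝 τ₀, g τ ≠ 0 := hg_an.continuousAt.eventually_ne hg0
    have hφev : ∀ᶠ τ in 𝓝 τ₀, AnalyticAt ℝ φ τ := hφ_an.eventually_analyticAt
    have hball' : ∀ᶠ τ in 𝓝 τ₀, τ ∈ Metric.ball τ₀ (2 * Real.pi) :=
      Metric.ball_mem_nhds _ two_pi_pos
    obtain ⟨U, hUsub, hUopen, hτ₀U⟩ :=
      mem_nhds_iff.mp (hgev.and (hgne.and (hφev.and (hfg.and (hψφ.and hball')))) : _)
    have hprop : ∀ τ ∈ U, AnalyticAt ℝ g τ ∧ g τ ≠ 0 ∧ AnalyticAt ℝ φ τ ∧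
        (x t - x τ = (τ - τ₀) ^ n • g τ) ∧ (ψ τ = (τ - τ₀) ^ (M + 1) * φ τ) ∧
        τ ∈ Metric.ball τ₀ (2 * Real.pi) := fun τ hτ => hUsub hτ
    have hnl : ∀ τ ∈ U, τ ≠ τ₀ → ¬ ∃ k : ℤ, τ = t + 2 * Real.pi * k := by
      intro τ hτ hne hPτ
      have h1 := hspacing τ₀ τ hPτ₀ hPτ hne
      have h2 : |τ - τ₀| < 2 * Real.pi := by
        have := (hprop τ hτ).2.2.2.2.2
        rwa [Metric.mem_ball, Real.dist_eq] at this
      linarith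
    have hb_cd : ∀ τ ∈ U, ContDiffAt ℝ ((⊤ : ℕ∞) : WithTop ℕ∞)
        (fun τ => Real.log ‖g τ‖) τ := by
      intro τ hτ
      obtain ⟨h1, h2, -⟩ := hprop τ hτ
      exact (h1.contDiffAt.norm ℝ h2).log (norm_ne_zero_iff.2 h2)
    have hR_loc : ∀ τ ∈ U, τ ≠ τ₀ →
        R τ = Real.log ‖g τ‖ * ψ τ +
          ((n : ℝ) * φ τ) * ((τ - τ₀) ^ (M + 1) * Real.log (τ - τ₀)) := by
      intro τ hτ hne
      obtain ⟨-, hg2, -, hfac, hψfac, -⟩ := hprop τ hτ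
      have hsne : τ - τ₀ ≠ 0 := sub_ne_zero.2 hne
      have hlog : Real.log ‖x t - x τ‖ = (n : ℝ) * Real.log (τ - τ₀) + Real.log ‖g τ‖ := by
        rw [hfac, norm_smul, norm_pow, Real.norm_eq_abs,
          Real.log_mul (pow_ne_zero n (abs_ne_zero.2 hsne)) (norm_ne_zero_iff.2 hg2),
          Real.log_pow, Real.log_abs]
      rw [hR_off τ (hnl τ hτ hne), hlog, hψfac]
      ring
    -- smoothness of R at τ₀
    have hFev : R =ᶠ[𝓝 τ₀] (fun τ => Real.log ‖g τ‖ * ψ τ +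
        ((n : ℝ) * φ τ) * ((τ - τ₀) ^ (M + 1) * Real.log (τ - τ₀))) := by
      filter_upwards [hUopen.mem_nhds hτ₀U] with τ hτ
      rcases eq_or_ne τ τ₀ with rfl | hne
      · rw [hR_on τ hPτ₀, hψτ₀]
        simp [zero_pow (Nat.succ_ne_zero M)]
      · exact hR_loc τ hτ hne
    have hGcd : ContDiff ℝ (M : ℕ∞) (fun τ : ℝ => (τ - τ₀) ^ (M + 1) * Real.log (τ - τ₀)) :=
      (contDiff_pow_log M).comp (contDiff_id.sub contDiff_const)
    have hMletop : ((M : ℕ∞) : WithTop ℕ∞) ≤ ((⊤ : ℕ∞) : WithTop ℕ∞) := by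
      exact_mod_cast le_top
    have hF_cd : ContDiffAt ℝ (M : ℕ∞) (fun τ => Real.log ‖g τ‖ * ψ τ +
        ((n : ℝ) * φ τ) * ((τ - τ₀) ^ (M + 1) * Real.log (τ - τ₀))) τ₀ := by
      refine ContDiffAt.add ?_ ?_
      · exact ((hb_cd τ₀ hτ₀U).of_le hMletop).mul (hψ_an τ₀).contDiffAt
      · exact (contDiffAt_const.mul hφ_an.contDiffAt).mul hGcd.contDiffAt
    have hRsmooth : ContDiffAt ℝ (M : ℕ∞) R τ₀ := hF_cd.congr_of_eventuallyEq hFev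
    refine ⟨hRsmooth, ?_⟩
    -- the derivative invariant
    have hUopen' : IsOpen (U \ {τ₀}) := hUopen.sdiff isClosed_singleton
    have INV : ∀ m : ℕ, m ≤ M + 1 → ∃ p q : ℝ → ℝ,
        ContDiffOn ℝ ((⊤ : ℕ∞) : WithTop ℕ∞) p U ∧
        ContDiffOn ℝ ((⊤ : ℕ∞) : WithTop ℕ∞) q U ∧
        ∀ τ ∈ U, τ ≠ τ₀ → iteratedDeriv m R τ
          = p τ + (τ - τ₀) ^ (M + 1 - m) * (q τ * Real.log (τ - τ₀)) := by
      intro m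
      induction m with
      | zero =>
          intro _
          refine ⟨fun τ => Real.log ‖g τ‖ * ψ τ, fun τ => (n : ℝ) * φ τ, ?_, ?_, ?_⟩
          · intro τ hτ
            exact (((hb_cd τ hτ)).mul (hψ_an τ).contDiffAt).contDiffWithinAt
          · intro τ hτ
            exact (contDiffAt_const.mul ((hprop τ hτ).2.2.1).contDiffAt).contDiffWithinAt
          · intro τ hτ hne
            rw [iteratedDeriv_zero, hR_loc τ hτ hne]
            simp only [Nat.sub_zero]
            ring
      | succ m ih =>
          intro hm
          obtain ⟨p, q, hp, hq, heq⟩ := ih (by omega)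
          have hmM : m ≤ M := by omega
          have htop1 : (((⊤ : ℕ∞) : WithTop ℕ∞) + 1) ≤ ((⊤ : ℕ∞) : WithTop ℕ∞) := by
            exact_mod_cast le_top
          have hdp := hp.deriv_of_isOpen hUopen htop1
          have hdq := hq.deriv_of_isOpen hUopen htop1
          refine ⟨fun τ => deriv p τ + (τ - τ₀) ^ (M - m) * q τ,
            fun τ => ((M + 1 - m : ℕ) : ℝ) * q τ + (τ - τ₀) * deriv q τ, ?_, ?_, ?_⟩
          · exact hdp.add (((contDiffOn_id.sub contDiffOn_const).pow _).mul hq)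
          · exact (contDiffOn_const.mul hq).add
              ((contDiffOn_id.sub contDiffOn_const).mul hdq)
          · intro τ hτ hne
            have hEv : iteratedDeriv m R =ᶠ[𝓝 τ]
                (fun τ' => p τ' + (τ' - τ₀) ^ (M + 1 - m) * (q τ' * Real.log (τ' - τ₀))) := by
              filter_upwards [hUopen'.mem_nhds ⟨hτ, hne⟩] with y hy using heq y hy.1 hy.2
            rw [iteratedDeriv_succ, hEv.deriv_eq]
            have hsne : τ - τ₀ ≠ 0 := sub_ne_zero.2 hne
            have h1top : (1 : WithTop ℕ∞) ≤ ((⊤ : ℕ∞) : WithTop ℕ∞) := by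
              exact_mod_cast le_top
            have hpd : HasDerivAt p (deriv p τ) τ :=
              (((hp.differentiableOn (by simp)).differentiableAt (hUopen.mem_nhds hτ))).hasDerivAt
            have hqd : HasDerivAt q (deriv q τ) τ :=
              (((hq.differentiableOn (by simp)).differentiableAt (hUopen.mem_nhds hτ))).hasDerivAt
            have hpow : HasDerivAt (fun y : ℝ => (y - τ₀) ^ (M + 1 - m))
                (((M + 1 - m : ℕ) : ℝ) * (τ - τ₀) ^ (M - m)) τ := by
              have := ((hasDerivAt_id τ).sub_const τ₀).fun_pow (M + 1 - m)
              simpa [show M + 1 - m - 1 = M - m from by omega] using this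
            have hlog : HasDerivAt (fun y : ℝ => Real.log (y - τ₀)) ((τ - τ₀)⁻¹) τ := by
              have h0 := (Real.hasDerivAt_log hsne).comp τ ((hasDerivAt_id τ).sub_const τ₀)
              have : HasDerivAt (fun y : ℝ => Real.log (y - τ₀)) ((τ - τ₀)⁻¹ * 1) τ := h0
              simpa using this
            have hbig := hpd.fun_add (hpow.fun_mul (hqd.fun_mul hlog))
            rw [hbig.deriv]
            have hpowsplit : (τ - τ₀) ^ (M + 1 - m) = (τ - τ₀) ^ (M - m) * (τ - τ₀) := by
              rw [show M + 1 - m = M - m + 1 from by omega, pow_succ]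
            rw [hpowsplit, show M + 1 - (m + 1) = M - m from by omega]
            field_simp
            ring
    -- integrability near τ₀
    obtain ⟨p, q, hp, hq, heq⟩ := INV (M + 1) le_rfl
    obtain ⟨ε, hε, hball⟩ := Metric.nhds_basis_closedBall.mem_iff.mp (hUopen.mem_nhds hτ₀U)
    have hIcc : Icc (τ₀ - ε) (τ₀ + ε) ⊆ U := by
      rw [← Real.closedBall_eq_Icc]; exact hball
    refine ⟨ε, hε, ?_⟩
    have hpc : ContinuousOn p (Icc (τ₀ - ε) (τ₀ + ε)) := (hp.continuousOn).mono hIcc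
    have hqc : ContinuousOn q (Icc (τ₀ - ε) (τ₀ + ε)) := (hq.continuousOn).mono hIcc
    have hlogInt : IntegrableOn (fun τ => Real.log (τ - τ₀)) (Icc (τ₀ - ε) (τ₀ + ε)) :=
      integrableOn_log_shift τ₀ _ _
    obtain ⟨C, hC⟩ := isCompact_Icc.exists_bound_of_continuousOn hqc
    have hqlog : IntegrableOn (fun τ => q τ * Real.log (τ - τ₀)) (Icc (τ₀ - ε) (τ₀ + ε)) := by
      refine Integrable.mono' ((hlogInt.abs).const_mul C) ?_ ?_
      · exact (hqc.aestronglyMeasurable measurableSet_Icc).mul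
          ((Real.measurable_log.comp (measurable_id.sub_const τ₀)).aestronglyMeasurable)
      · filter_upwards [ae_restrict_mem measurableSet_Icc] with τ hτ
        have h1 := hC τ hτ
        rw [Real.norm_eq_abs] at h1 ⊢
        rw [abs_mul]
        exact mul_le_mul_of_nonneg_right h1 (abs_nonneg _)
    have hg₀ : IntegrableOn (fun τ => p τ + q τ * Real.log (τ - τ₀)) (Icc (τ₀ - ε) (τ₀ + ε)) :=
      (hpc.integrableOn_compact isCompact_Icc).add hqlog
    refine hg₀.congr ?_
    have h1 : ∀ᵐ τ ∂(volume.restrict (Icc (τ₀ - ε) (τ₀ + ε))), τ ≠ τ₀ := by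
      refine ae_restrict_of_ae ?_
      have hset : {τ : ℝ | ¬ τ ≠ τ₀} = {τ₀} := by ext τ; simp
      rw [ae_iff, hset]
      exact measure_singleton τ₀
    filter_upwards [h1, ae_restrict_mem measurableSet_Icc] with τ h2 h3
    rw [heq τ (hIcc h3) h2]
    simp
  refine ⟨?_, ?_, ?_, ?_⟩
  · -- periodicity
    intro τ
    by_cases hPτ : ∃ k : ℤ, τ = t + 2 * Real.pi * k
    · obtain ⟨k, rfl⟩ := hPτ
      have hPτ' : ∃ k' : ℤ, t + 2 * Real.pi * k + 2 * Real.pi = t + 2 * Real.pi * k' :=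
        ⟨k + 1, by push_cast; ring⟩
      rw [hR_on _ hPτ', hR_on _ ⟨k, rfl⟩]
    · have hPτ' : ¬ ∃ k' : ℤ, τ + 2 * Real.pi = t + 2 * Real.pi * k' := by
        rintro ⟨k', hk'⟩
        exact hPτ ⟨k' - 1, by push_cast; linarith⟩
      rw [hR_off _ hPτ', hR_off _ hPτ, hx_per τ, hψ_per τ]
  · -- C^M regularity
    rw [contDiff_iff_contDiffAt]
    intro τ
    by_cases hPτ : ∃ k : ℤ, τ = t + 2 * Real.pi * k
    · exact (lattice_main τ hPτ).1
    · have hle : ((M : ℕ∞) : WithTop ℕ∞) ≤ ((⊤ : ℕ∞) : WithTop ℕ∞) := by exact_mod_cast le_top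
      exact ((hA τ hPτ).of_le hle).congr_of_eventuallyEq (hRA τ hPτ)
  · -- differentiability of the M-th derivative off the lattice
    intro τ hPτ
    have h1top : (1 : WithTop ℕ∞) ≤ ((⊤ : ℕ∞) : WithTop ℕ∞) := by exact_mod_cast le_top
    have hd : DifferentiableAt ℝ
        (iteratedDeriv M (fun τ => Real.log ‖x t - x τ‖ * ψ τ)) τ :=
      ((contDiffOn_iteratedDeriv' hVopen hAV M).differentiableOn (by simp)).differentiableAt
        (hVopen.mem_nhds hPτ)
    have hEvEq : iteratedDeriv M R =ᶠ[𝓝 τ]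
        iteratedDeriv M (fun τ => Real.log ‖x t - x τ‖ * ψ τ) := by
      filter_upwards [hVopen.mem_nhds hPτ] with y hy using hiterEq M y hy
    exact hd.congr_of_eventuallyEq hEvEq
  · -- integrability of the (M+1)-st derivative
    refine LocallyIntegrableOn.integrableOn_isCompact ?_ isCompact_Icc
    intro τ hτ
    by_cases hPτ : ∃ k : ℤ, τ = t + 2 * Real.pi * k
    · obtain ⟨-, ε, hε, hint⟩ := lattice_main τ hPτ
      exact ⟨Icc (τ - ε) (τ + ε),
        mem_nhdsWithin_of_mem_nhds (Icc_mem_nhds (by linarith) (by linarith)), hint⟩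
    · obtain ⟨ε, hε, hball⟩ := Metric.nhds_basis_closedBall.mem_iff.mp (hVopen.mem_nhds hPτ)
      have hIccV : Icc (τ - ε) (τ + ε) ⊆ {τ : ℝ | ¬ ∃ k : ℤ, τ = t + 2 * Real.pi * k} := by
        rw [← Real.closedBall_eq_Icc]; exact hball
      have hcont : ContinuousOn (iteratedDeriv (M + 1) R)
          {τ : ℝ | ¬ ∃ k : ℤ, τ = t + 2 * Real.pi * k} := by
        refine ContinuousOn.congr ?_ (fun y hy => hiterEq (M + 1) y hy)
        exact (contDiffOn_iteratedDeriv' hVopen hAV (M + 1)).continuousOn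
      exact ⟨Icc (τ - ε) (τ + ε),
        mem_nhdsWithin_of_mem_nhds (Icc_mem_nhds (by linarith) (by linarith)),
        (hcont.mono hIccV).integrableOn_compact isCompact_Icc⟩
end

section
/- Let ζ : ℝ → ℂ be infinitely differentiable, let t ∈ ℝ with ζ'(t) ≠ 0, and let M ≥ 0 be an integer. Then for every (w₀, …, w_M) ∈ ℂ^{M+1} there exist unique coefficients c₀, …, c_M ∈ ℂ such that the function f(τ) = Σ_{j=0}^{M} (c_j / j!) (ζ(τ) − ζ(t))^j satisfies f⁽ᵐ⁾(t) = w_m for every m = 0, …, M. -/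
open scoped BigOperators ContDiff

lemma iD_zero (n : ℕ) (x : ℝ) : iteratedDeriv n (fun _ : ℝ => (0 : ℂ)) x = 0 := by
  cases n with
  | zero => simp
  | succ n =>
    rw [iteratedDeriv, iteratedFDeriv_const_of_ne (Nat.succ_ne_zero n)]
    simp

lemma iD_add {f g : ℝ → ℂ} (n : ℕ) (hf : ContDiff ℝ ∞ f) (hg : ContDiff ℝ ∞ g) (x : ℝ) :
    iteratedDeriv n (fun τ => f τ + g τ) x = iteratedDeriv n f x + iteratedDeriv n g x := by
  simp_rw [← iteratedDerivWithin_univ]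
  exact iteratedDerivWithin_add (Set.mem_univ x) uniqueDiffOn_univ
    ((hf.of_le (mod_cast le_top : (n : WithTop ℕ∞) ≤ ∞)).contDiffWithinAt)
      ((hg.of_le (mod_cast le_top : (n : WithTop ℕ∞) ≤ ∞)).contDiffWithinAt)

lemma iD_cmul (a : ℂ) {f : ℝ → ℂ} (n : ℕ) (hf : ContDiff ℝ ∞ f) (x : ℝ) :
    iteratedDeriv n (fun τ => a * f τ) x = a * iteratedDeriv n f x := by
  simp_rw [← iteratedDerivWithin_univ]
  have := iteratedDerivWithin_const_smul (R := ℂ) (Set.mem_univ x) uniqueDiffOn_univ a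
    ((hf.of_le (mod_cast le_top : (n : WithTop ℕ∞) ≤ ∞)).contDiffWithinAt)
  simpa [smul_eq_mul] using this

lemma iD_sum {ι : Type*} [DecidableEq ι] (s : Finset ι) (F : ι → ℝ → ℂ)
    (hF : ∀ i ∈ s, ContDiff ℝ ∞ (F i)) (n : ℕ) (x : ℝ) :
    iteratedDeriv n (fun τ => ∑ i ∈ s, F i τ) x = ∑ i ∈ s, iteratedDeriv n (F i) x := by
  induction s using Finset.induction with
  | empty => simpa using iD_zero n x
  | insert a s' hni ih =>
    simp only [Finset.sum_insert hni]
    rw [iD_add n (hF a (Finset.mem_insert_self a s'))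
      (ContDiff.sum fun i hi => hF i (Finset.mem_insert_of_mem hi)), ih
      (fun i hi => hF i (Finset.mem_insert_of_mem hi))]

section core

variable {ζ : ℝ → ℂ} (hζ : ContDiff ℝ ∞ ζ) (t : ℝ)

include hζ

lemma deriv_prod_pow (h : ℝ → ℂ) (hh : ContDiff ℝ ∞ h) (k : ℕ) :
    deriv (fun τ => h τ * (ζ τ - ζ t) ^ (k + 1)) =
      fun τ => deriv h τ * (ζ τ - ζ t) ^ (k + 1) +
        (((k : ℂ) + 1) * deriv ζ τ * h τ) * (ζ τ - ζ t) ^ k := by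
  funext τ
  have h1 : HasDerivAt h (deriv h τ) τ :=
    ((hh.differentiable (by simp)) τ).hasDerivAt
  have hd : HasDerivAt (fun τ => ζ τ - ζ t) (deriv ζ τ) τ :=
    (((hζ.differentiable (by simp)) τ).hasDerivAt).sub_const (ζ t)
  have h2 : HasDerivAt (fun τ => (ζ τ - ζ t) ^ (k + 1))
      (((k : ℂ) + 1) * (ζ τ - ζ t) ^ k * deriv ζ τ) τ := by
    have h2' : HasDerivAt ((fun z : ℂ => z ^ (k + 1)) ∘ (fun τ => ζ τ - ζ t))
        ((((k + 1 : ℕ) : ℂ) * (ζ τ - ζ t) ^ k) * deriv ζ τ) τ :=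
      HasDerivAt.comp τ (by simpa using hasDerivAt_pow (k + 1) (ζ τ - ζ t)) hd
    simpa [Function.comp_def, mul_comm, mul_assoc, mul_left_comm] using h2'
  have : deriv (fun τ => h τ * (ζ τ - ζ t) ^ (k + 1)) τ = _ := (h1.mul h2).deriv
  rw [this]; ring

lemma smooth_prod_pow (h : ℝ → ℂ) (hh : ContDiff ℝ ∞ h) (k : ℕ) :
    ContDiff ℝ ∞ (fun τ => h τ * (ζ τ - ζ t) ^ k) :=
  hh.mul ((hζ.sub contDiff_const).pow k)

lemma vanish : ∀ m : ℕ, ∀ h : ℝ → ℂ, ContDiff ℝ ∞ h → ∀ j : ℕ, m < j →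
    iteratedDeriv m (fun τ => h τ * (ζ τ - ζ t) ^ j) t = 0 := by
  intro m
  induction m with
  | zero =>
    intro h _ j hj
    simp [iteratedDeriv_zero, sub_self, zero_pow (by omega : j ≠ 0)]
  | succ m IH =>
    intro h hh j hj
    obtain ⟨k, rfl⟩ : ∃ k, j = k + 1 := ⟨j - 1, by omega⟩
    have hh' : ContDiff ℝ ∞ (deriv h) := (contDiff_infty_iff_deriv.mp hh).2
    have hc : ContDiff ℝ ∞ (fun τ => ((k : ℂ) + 1) * deriv ζ τ * h τ) :=
      (contDiff_const.mul (contDiff_infty_iff_deriv.mp hζ).2).mul hh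
    rw [iteratedDeriv_succ', deriv_prod_pow hζ t h hh k,
      iD_add m (smooth_prod_pow hζ t _ hh' (k + 1)) (smooth_prod_pow hζ t _ hc k),
      IH _ hh' (k + 1) (by omega), IH _ hc k (by omega), add_zero]

lemma diag : ∀ m : ℕ, ∀ h : ℝ → ℂ, ContDiff ℝ ∞ h →
    iteratedDeriv m (fun τ => h τ * (ζ τ - ζ t) ^ m) t =
      (Nat.factorial m : ℂ) * h t * (deriv ζ t) ^ m := by
  intro m
  induction m with
  | zero => intro h _; simp
  | succ m IH =>
    intro h hh
    have hh' : ContDiff ℝ ∞ (deriv h) := (contDiff_infty_iff_deriv.mp hh).2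
    have hc : ContDiff ℝ ∞ (fun τ => ((m : ℂ) + 1) * deriv ζ τ * h τ) :=
      (contDiff_const.mul (contDiff_infty_iff_deriv.mp hζ).2).mul hh
    rw [iteratedDeriv_succ', deriv_prod_pow hζ t h hh m,
      iD_add m (smooth_prod_pow hζ t _ hh' (m + 1)) (smooth_prod_pow hζ t _ hc m),
      vanish hζ t m _ hh' (m + 1) (by omega), IH _ hc, zero_add,
      Nat.factorial_succ]
    push_cast
    ring

end core

/-- Let `ζ : ℝ → ℂ` be infinitely differentiable, let `t ∈ ℝ` with
`ζ'(t) ≠ 0`, and let `M ≥ 0` be an integer. Then for every `(w₀, …, w_M) ∈ ℂ^(M+1)` there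
exist unique coefficients `c₀, …, c_M ∈ ℂ` such that the function
`f(τ) = Σ_{j=0}^{M} (c_j / j!) (ζ(τ) − ζ(t))^j` satisfies `f⁽ᵐ⁾(t) = w_m` for every
`m = 0, …, M`. -/
theorem stmt_7
    (ζ : ℝ → ℂ) (hζ : ContDiff ℝ (⊤ : ℕ∞) ζ)
    (t : ℝ) (hζ' : deriv ζ t ≠ 0)
    (M : ℕ) :
    ∀ w : Fin (M + 1) → ℂ, ∃! c : Fin (M + 1) → ℂ,
      ∀ m : Fin (M + 1),
        iteratedDeriv (m : ℕ)
          (fun τ : ℝ => ∑ j : Fin (M + 1),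
            c j / (Nat.factorial (j : ℕ) : ℂ) * (ζ τ - ζ t) ^ (j : ℕ)) t = w m := by
  intro w
  have hzi : ContDiff ℝ ∞ ζ := hζ.of_le (by simp)
  set A : Matrix (Fin (M + 1)) (Fin (M + 1)) ℂ := fun m j =>
    iteratedDeriv (m : ℕ) (fun τ => ((Nat.factorial (j : ℕ) : ℂ))⁻¹ * (ζ τ - ζ t) ^ (j : ℕ)) t
    with hA_def
  have hsmooth : ∀ j : Fin (M + 1),
      ContDiff ℝ ∞ (fun τ => ((Nat.factorial (j : ℕ) : ℂ))⁻¹ * (ζ τ - ζ t) ^ (j : ℕ)) :=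
    fun j => contDiff_const.mul ((hzi.sub contDiff_const).pow _)
  -- the main computation: derivatives of the candidate function are given by `A.mulVec c`
  have key : ∀ (c : Fin (M + 1) → ℂ) (m : Fin (M + 1)),
      iteratedDeriv (m : ℕ)
        (fun τ : ℝ => ∑ j : Fin (M + 1),
          c j / (Nat.factorial (j : ℕ) : ℂ) * (ζ τ - ζ t) ^ (j : ℕ)) t = A.mulVec c m := by
    intro c m
    have hfun : (fun τ : ℝ => ∑ j : Fin (M + 1),
          c j / (Nat.factorial (j : ℕ) : ℂ) * (ζ τ - ζ t) ^ (j : ℕ))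
        = fun τ : ℝ => ∑ j : Fin (M + 1),
          c j * (((Nat.factorial (j : ℕ) : ℂ))⁻¹ * (ζ τ - ζ t) ^ (j : ℕ)) := by
      funext τ
      exact Finset.sum_congr rfl fun j _ => by ring
    rw [hfun, iD_sum Finset.univ _ (fun j _ => contDiff_const.mul (hsmooth j)) (m : ℕ) t]
    have : ∀ j : Fin (M + 1),
        iteratedDeriv (m : ℕ)
          (fun τ => c j * (((Nat.factorial (j : ℕ) : ℂ))⁻¹ * (ζ τ - ζ t) ^ (j : ℕ))) t
        = c j * A m j := fun j => iD_cmul (c j) (m : ℕ) (hsmooth j) t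
    simp only [this, Matrix.mulVec, dotProduct]
    exact Finset.sum_congr rfl fun j _ => mul_comm _ _
  -- A is lower triangular with nonzero diagonal
  have htri : A.BlockTriangular OrderDual.toDual := by
    intro m j hmj
    exact vanish hzi t (m : ℕ) _ contDiff_const (j : ℕ) hmj
  have hdiag : ∀ m : Fin (M + 1), A m m = (deriv ζ t) ^ (m : ℕ) := by
    intro m
    show iteratedDeriv (m : ℕ)
      (fun τ => ((Nat.factorial (m : ℕ) : ℂ))⁻¹ * (ζ τ - ζ t) ^ (m : ℕ)) t = _
    rw [diag hzi t (m : ℕ) _ contDiff_const]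
    have : (Nat.factorial (m : ℕ) : ℂ) ≠ 0 := Nat.cast_ne_zero.mpr (Nat.factorial_ne_zero _)
    field_simp
  have hdet : IsUnit A.det := by
    rw [Matrix.det_of_lowerTriangular A htri]
    refine (Finset.prod_ne_zero_iff.mpr fun m _ => ?_).isUnit
    rw [hdiag m]
    exact pow_ne_zero _ hζ'
  -- existence and uniqueness via the inverse matrix
  refine ⟨A⁻¹.mulVec w, ?_, ?_⟩
  · intro m
    rw [key]
    rw [Matrix.mulVec_mulVec, Matrix.mul_nonsing_inv _ hdet, Matrix.one_mulVec]
  · intro c hc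
    have hAc : A.mulVec c = w := funext fun m => (key c m).symm.trans (hc m)
    calc c = (A⁻¹ * A).mulVec c := by
              rw [Matrix.nonsing_inv_mul _ hdet, Matrix.one_mulVec]
      _ = A⁻¹.mulVec w := by rw [← Matrix.mulVec_mulVec, hAc]
end

section
/- Let ζ : ℝ → ℂ be infinitely differentiable with ζ'(τ) ≠ 0 for all τ in a neighborhood of a fixed t ∈ ℝ, and let M ≥ 0 be an integer. Then for every (w₀, …, w_M) ∈ ℂ^{M+1} there exist unique coefficients c₁, …, c_{M+1} ∈ ℂ such that, with f(τ) = Σ_{j=1}^{M+1} (c_j / j!) (ζ(τ) − ζ(t))^j and g(τ) = f'(τ) / |ζ'(τ)|, one has g⁽ᵐ⁾(t) = w_m for every m = 0, …, M. -/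
open Filter Topology Finset

/-- Linearity of iterated derivative for sums of locally smooth functions. -/
private lemma iterDeriv_sum {N : ℕ} (U : Set ℝ) (hU : IsOpen U) :
    ∀ n : ℕ, ∀ F : Fin N → ℝ → ℂ, (∀ j, ContDiffOn ℝ (⊤ : ℕ∞) (F j) U) →
      ∀ c : Fin N → ℂ, ∀ x ∈ U,
      iteratedDeriv n (fun τ => ∑ j : Fin N, c j * F j τ) x
        = ∑ j : Fin N, c j * iteratedDeriv n (F j) x := by
  intro n
  induction n with
  | zero => intro F hF c x hx; simp [iteratedDeriv_zero]
  | succ n ih =>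
    intro F hF c x hx
    have hderiv : ∀ y ∈ U, deriv (fun τ => ∑ j : Fin N, c j * F j τ) y
        = ∑ j : Fin N, c j * deriv (F j) y := by
      intro y hy
      have hd : ∀ j : Fin N, HasDerivAt (F j) (deriv (F j) y) y := fun j =>
        (((hF j).differentiableOn (by norm_num)).differentiableAt
          (hU.mem_nhds hy)).hasDerivAt
      have : HasDerivAt (fun τ => ∑ j : Fin N, c j * F j τ)
          (∑ j : Fin N, c j * deriv (F j) y) y := by
        apply HasDerivAt.fun_sum
        intro j _
        exact (hd j).const_mul (c j)
      exact this.deriv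
    have hev : deriv (fun τ => ∑ j : Fin N, c j * F j τ)
        =ᶠ[𝓝 x] fun y => ∑ j : Fin N, c j * deriv (F j) y :=
      eventually_of_mem (hU.mem_nhds hx) hderiv
    rw [iteratedDeriv_succ', hev.iteratedDeriv_eq n]
    rw [ih (fun j => deriv (F j))
      (fun j => (hF j).deriv_of_isOpen hU (by exact_mod_cast le_top)) c x hx]
    congr 1
    ext j
    rw [iteratedDeriv_succ']

/-- Key vanishing / diagonal lemma. -/
private lemma key (ζ : ℝ → ℂ) (hζ : ContDiff ℝ (⊤ : ℕ∞) ζ) (t : ℝ)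
    (U : Set ℝ) (hU : IsOpen U) (htU : t ∈ U) :
    ∀ j : ℕ, ∀ φ : ℝ → ℂ, ContDiffOn ℝ (⊤ : ℕ∞) φ U →
      (∀ m : ℕ, m < j → iteratedDeriv m (fun τ => (ζ τ - ζ t) ^ j * φ τ) t = 0) ∧
      iteratedDeriv j (fun τ => (ζ τ - ζ t) ^ j * φ τ) t
        = (j.factorial : ℂ) * (deriv ζ t) ^ j * φ t := by
  have h1le : (1 : WithTop ℕ∞) ≤ ((⊤ : ℕ∞) : WithTop ℕ∞) := by exact_mod_cast le_top
  intro j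
  induction j with
  | zero =>
    intro φ hφ
    refine ⟨fun m hm => absurd hm (by omega), ?_⟩
    simp [iteratedDeriv_zero]
  | succ j ih =>
    intro φ hφ
    -- the derivative of (ζ - ζ t)^(j+1) * φ near t
    set φ' : ℝ → ℂ := fun τ => ((j : ℂ) + 1) * deriv ζ τ * φ τ + (ζ τ - ζ t) * deriv φ τ
      with hφ'def
    have hζd : ContDiff ℝ (⊤ : ℕ∞) (deriv ζ) := by
      rw [contDiff_infty_iff_deriv] at hζ
      exact hζ.2
    have hφ' : ContDiffOn ℝ (⊤ : ℕ∞) φ' U := by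
      apply ContDiffOn.add
      · exact (contDiffOn_const.mul hζd.contDiffOn).mul hφ
      · exact ((hζ.contDiffOn.sub contDiffOn_const).mul
          (hφ.deriv_of_isOpen hU (by exact_mod_cast le_top)))
    have hderiv : ∀ y ∈ U, deriv (fun τ => (ζ τ - ζ t) ^ (j + 1) * φ τ) y
        = (ζ y - ζ t) ^ j * φ' y := by
      intro y hy
      have hζy : HasDerivAt ζ (deriv ζ y) y :=
        (hζ.differentiable (by simp) y).hasDerivAt
      have hφy : HasDerivAt φ (deriv φ y) y :=
        ((hφ.differentiableOn (by simp)).differentiableAt (hU.mem_nhds hy)).hasDerivAt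
      have h1 : HasDerivAt (fun τ => (ζ τ - ζ t) ^ (j + 1))
          ((↑(j + 1) : ℂ) * (ζ y - ζ t) ^ j * deriv ζ y) y := by
        have := (hasDerivAt_pow (j + 1) (ζ y - ζ t)).comp y (hζy.sub_const (ζ t))
        simpa [Function.comp_def, mul_assoc] using this
      have := h1.fun_mul hφy
      rw [this.deriv]
      push_cast
      ring
    have hev : deriv (fun τ => (ζ τ - ζ t) ^ (j + 1) * φ τ)
        =ᶠ[𝓝 t] fun y => (ζ y - ζ t) ^ j * φ' y :=
      eventually_of_mem (hU.mem_nhds htU) hderiv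
    constructor
    · intro m hm
      match m with
      | 0 => simp [iteratedDeriv_zero]
      | (k + 1) =>
        rw [iteratedDeriv_succ', hev.iteratedDeriv_eq k]
        exact (ih φ' hφ').1 k (by omega)
    · rw [iteratedDeriv_succ', hev.iteratedDeriv_eq j, (ih φ' hφ').2]
      simp only [hφ'def]
      rw [Nat.factorial_succ]
      push_cast
      ring

/-- Let `ζ : ℝ → ℂ` be infinitely differentiable with `ζ'(τ) ≠ 0` for all
`τ` in a neighborhood of a fixed `t ∈ ℝ`, and let `M ≥ 0` be an integer. Then for every
`(w₀, …, w_M) ∈ ℂ^(M+1)` there exist unique coefficients `c₁, …, c_{M+1} ∈ ℂ` such that,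
with `f(τ) = Σ_{j=1}^{M+1} (c_j / j!) (ζ(τ) − ζ(t))^j` and `g(τ) = f'(τ) / |ζ'(τ)|`, one
has `g⁽ᵐ⁾(t) = w_m` for every `m = 0, …, M`.  (Here `c : Fin (M+1) → ℂ` collects the
coefficients `c_1, …, c_{M+1}`, i.e. `c j` is `c_{j+1}`.) -/
theorem stmt_8
    (ζ : ℝ → ℂ) (hζ : ContDiff ℝ (⊤ : ℕ∞) ζ)
    (t : ℝ) (hζ' : ∀ᶠ τ in nhds t, deriv ζ τ ≠ 0)
    (M : ℕ) :
    ∀ w : Fin (M + 1) → ℂ, ∃! c : Fin (M + 1) → ℂ,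
      ∀ m : Fin (M + 1),
        iteratedDeriv (m : ℕ)
          (fun τ : ℝ =>
            deriv (fun σ : ℝ => ∑ j : Fin (M + 1),
              c j / (Nat.factorial ((j : ℕ) + 1) : ℂ) * (ζ σ - ζ t) ^ ((j : ℕ) + 1)) τ
            / (‖deriv ζ τ‖ : ℂ)) t = w m := by
  intro w
  have hζ : ContDiff ℝ (⊤ : ℕ∞) ζ := hζ.of_le (by simp)
  have h1le : (1 : WithTop ℕ∞) ≤ ((⊤ : ℕ∞) : WithTop ℕ∞) := by exact_mod_cast le_top
  obtain ⟨U, hUsub, hUopen, htU⟩ := eventually_nhds_iff.mp hζ'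
  have hζd : ContDiff ℝ (⊤ : ℕ∞) (deriv ζ) := (contDiff_infty_iff_deriv.mp hζ).2
  -- the building blocks
  set φf : ℕ → ℝ → ℂ := fun j τ =>
    ((j : ℂ) + 1) * deriv ζ τ / (Nat.factorial (j + 1) : ℂ) / (‖deriv ζ τ‖ : ℂ)
    with hφfdef
  set h : ℕ → ℝ → ℂ := fun j τ => (ζ τ - ζ t) ^ j * φf j τ with hhdef
  have habs : ContDiffOn ℝ (⊤ : ℕ∞) (fun τ => ((‖deriv ζ τ‖ : ℝ) : ℂ)) U := by
    intro τ hτ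
    have h1 : ContDiffAt ℝ (⊤ : ℕ∞) (fun y => ‖deriv ζ y‖) τ :=
      (hζd.contDiffAt).norm ℂ (hUsub τ hτ)
    have h2 : ContDiffAt ℝ (⊤ : ℕ∞) (fun τ => ((‖deriv ζ τ‖ : ℝ) : ℂ)) τ := by
      exact Complex.ofRealCLM.contDiff.contDiffAt.comp τ h1
    exact h2.contDiffWithinAt
  have habsne : ∀ τ ∈ U, ((‖deriv ζ τ‖ : ℝ) : ℂ) ≠ 0 := by
    intro τ hτ
    simp only [ne_eq, Complex.ofReal_eq_zero, norm_eq_zero]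
    exact hUsub τ hτ
  have hφf : ∀ j : ℕ, ContDiffOn ℝ (⊤ : ℕ∞) (φf j) U := by
    intro j
    simp only [hφfdef, div_eq_mul_inv]
    exact ((contDiffOn_const.mul hζd.contDiffOn).mul contDiffOn_const).mul (habs.inv habsne)
  have hh : ∀ j : ℕ, ContDiffOn ℝ (⊤ : ℕ∞) (h j) U := fun j =>
    ((hζ.contDiffOn.sub contDiffOn_const).pow j).mul (hφf j)
  -- the function in the statement equals a linear combination of the `h j`
  have hfun : ∀ c : Fin (M + 1) → ℂ,
      (fun τ : ℝ =>
        deriv (fun σ : ℝ => ∑ j : Fin (M + 1),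
          c j / (Nat.factorial ((j : ℕ) + 1) : ℂ) * (ζ σ - ζ t) ^ ((j : ℕ) + 1)) τ
        / (‖deriv ζ τ‖ : ℂ))
      = fun τ => ∑ j : Fin (M + 1), c j * h ((j : ℕ)) τ := by
    intro c
    funext τ
    have hd : HasDerivAt (fun σ : ℝ => ∑ j : Fin (M + 1),
        c j / (Nat.factorial ((j : ℕ) + 1) : ℂ) * (ζ σ - ζ t) ^ ((j : ℕ) + 1))
        (∑ j : Fin (M + 1), c j / (Nat.factorial ((j : ℕ) + 1) : ℂ) *
          (((j : ℕ) + 1 : ℂ) * (ζ τ - ζ t) ^ ((j : ℕ)) * deriv ζ τ)) τ := by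
      apply HasDerivAt.fun_sum
      intro j _
      have hζτ : HasDerivAt ζ (deriv ζ τ) τ :=
        (hζ.differentiable (by simp) τ).hasDerivAt
      have h1 := (hasDerivAt_pow ((j : ℕ) + 1) (ζ τ - ζ t)).comp τ (hζτ.sub_const (ζ t))
      have := h1.const_mul (c j / (Nat.factorial ((j : ℕ) + 1) : ℂ))
      simpa [Function.comp_def, mul_assoc] using this
    rw [hd.deriv, Finset.sum_div]
    apply Finset.sum_congr rfl
    intro j _
    simp only [hhdef, hφfdef]
    ring
  -- the matrix of the linear system
  set A : Matrix (Fin (M + 1)) (Fin (M + 1)) ℂ :=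
    fun m j => iteratedDeriv (m : ℕ) (h ((j : ℕ))) t with hAdef
  have hcond : ∀ c : Fin (M + 1) → ℂ,
      (∀ m : Fin (M + 1),
        iteratedDeriv (m : ℕ)
          (fun τ : ℝ =>
            deriv (fun σ : ℝ => ∑ j : Fin (M + 1),
              c j / (Nat.factorial ((j : ℕ) + 1) : ℂ) * (ζ σ - ζ t) ^ ((j : ℕ) + 1)) τ
            / (‖deriv ζ τ‖ : ℂ)) t = w m) ↔ A.mulVec c = w := by
    intro c
    rw [funext_iff]
    apply forall_congr'
    intro m
    rw [hfun c, iterDeriv_sum U hUopen (m : ℕ) (fun j => h ((j : ℕ)))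
      (fun j => hh _) c t htU]
    simp only [Matrix.mulVec, dotProduct, hAdef]
    rw [Finset.sum_congr rfl (fun j _ => mul_comm (c j) _)]
  -- triangularity and nonzero diagonal
  have hkey := key ζ hζ t U hUopen htU
  have htri : ∀ m j : Fin (M + 1), m < j → A m j = 0 := by
    intro m j hmj
    exact (hkey (j : ℕ) (φf (j : ℕ)) (hφf _)).1 (m : ℕ) (Fin.lt_def.mp hmj)
  have hdiag : ∀ j : Fin (M + 1), A j j ≠ 0 := by
    intro j
    have := (hkey (j : ℕ) (φf (j : ℕ)) (hφf _)).2
    rw [hAdef]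
    simp only [this, hφfdef]
    have h1 : deriv ζ t ≠ 0 := hUsub t htU
    have h2 : ((‖deriv ζ t‖ : ℝ) : ℂ) ≠ 0 := habsne t htU
    have h3 : ((Nat.factorial ((j : ℕ) + 1) : ℂ)) ≠ 0 := by
      exact_mod_cast (Nat.factorial_pos ((j : ℕ) + 1)).ne'
    have h4 : ((Nat.factorial (j : ℕ) : ℂ)) ≠ 0 := by
      exact_mod_cast (Nat.factorial_pos (j : ℕ)).ne'
    have h5 : (((j : ℕ) : ℂ) + 1) ≠ 0 := by
      exact_mod_cast Nat.succ_ne_zero (j : ℕ)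
    rw [show iteratedDeriv (j : ℕ) (h (j : ℕ)) t = _ from this]
    exact mul_ne_zero (mul_ne_zero h4 (pow_ne_zero _ h1)) (div_ne_zero (div_ne_zero (mul_ne_zero h5 h1) h3) h2)
  have hdet : IsUnit A.det := by
    rw [Matrix.det_of_lowerTriangular A (by intro i j hij; exact htri i j hij)]
    exact isUnit_iff_ne_zero.mpr (Finset.prod_ne_zero_iff.mpr fun j _ => hdiag j)
  -- solve the linear system
  refine ⟨A⁻¹.mulVec w, ?_, ?_⟩
  · refine (hcond (A⁻¹.mulVec w)).mpr ?_
    rw [Matrix.mulVec_mulVec, Matrix.mul_nonsing_inv A hdet, Matrix.one_mulVec]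
  · intro c hc
    replace hc := (hcond c).mp hc
    calc c = (A⁻¹ * A).mulVec c := by
            rw [Matrix.nonsing_inv_mul A hdet, Matrix.one_mulVec]
      _ = A⁻¹.mulVec w := by rw [← Matrix.mulVec_mulVec, hc]
end

section
/- Let ζ : ℝ → ℂ be infinitely differentiable with ζ'(τ) ≠ 0 for all τ in a neighborhood of a fixed t ∈ ℝ, let M ≥ 1 be an integer, let φ : ℝ → ℝ be M-times differentiable, and suppose f(τ) = Σ_{j=0}^{M} (c_j / j!) (ζ(τ) − ζ(t))^j with c₀, …, c_M ∈ ℂ satisfies f⁽ᵐ⁾(t) = φ⁽ᵐ⁾(t) for m = 0, …, M. Then the function Q(τ) = Im(f'(τ)) / |ζ'(τ)| satisfies Q⁽ᵐ⁾(t) = 0 for every m = 0, …, M − 1; consequently Q(τ) = O((τ − t)^M) as τ → t. -/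
open Filter Topology Asymptotics
open scoped ContDiff
open scoped ContDiff

lemma auxDeriv {E : Type*} [NormedAddCommGroup E] [NormedSpace ℝ E] {f : ℝ → E} {x : ℝ}
    (h : ContDiffAt ℝ ∞ f x) : ContDiffAt ℝ ∞ (deriv f) x := by
  have h1 : ContDiffAt ℝ ∞ (fderiv ℝ f) x := h.fderiv_right (by simp)
  have h2 : ContDiffAt ℝ ∞ (fun L : ℝ →L[ℝ] E => L 1) (fderiv ℝ f x) :=
    ((ContinuousLinearMap.apply ℝ E (1:ℝ)).contDiff).contDiffAt
  exact (h2.comp x h1).congr_of_eventuallyEq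
    (Filter.Eventually.of_forall fun y => (fderiv_apply_one_eq_deriv).symm)

lemma auxEvDiff {E : Type*} [NormedAddCommGroup E] [NormedSpace ℝ E] {f : ℝ → E} {x : ℝ}
    (h : ContDiffAt ℝ ∞ f x) : ∀ᶠ y in 𝓝 x, DifferentiableAt ℝ f y := by
  have h1 : ContDiffAt ℝ 1 f x := h.of_le (by exact_mod_cast le_top)
  filter_upwards [h1.eventually (by simp)] with y hy using hy.differentiableAt one_ne_zero

lemma auxAdd (t : ℝ) : ∀ (m : ℕ) {f g : ℝ → ℝ}, ContDiffAt ℝ ∞ f t → ContDiffAt ℝ ∞ g t →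
    iteratedDeriv m (fun x => f x + g x) t = iteratedDeriv m f t + iteratedDeriv m g t := by
  intro m
  induction m generalizing t with
  | zero => intro f g _ _; simp [iteratedDeriv_zero]
  | succ m IH =>
    intro f g hf hg
    rw [iteratedDeriv_succ', iteratedDeriv_succ', iteratedDeriv_succ']
    have hev : deriv (fun x => f x + g x) =ᶠ[𝓝 t] fun x => deriv f x + deriv g x := by
      filter_upwards [auxEvDiff hf, auxEvDiff hg] with y h1 h2 using deriv_add h1 h2
    rw [hev.iteratedDeriv_eq m]
    exact IH t (auxDeriv hf) (auxDeriv hg)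

lemma auxMulVanish (t : ℝ) : ∀ (m : ℕ) {g h : ℝ → ℝ}, ContDiffAt ℝ ∞ g t → ContDiffAt ℝ ∞ h t →
    (∀ k ≤ m, iteratedDeriv k g t = 0) →
    iteratedDeriv m (fun τ => g τ * h τ) t = 0 := by
  intro m
  induction m generalizing t with
  | zero =>
    intro g h _ _ h0
    simpa [iteratedDeriv_zero] using mul_eq_zero_of_left (by simpa using h0 0 le_rfl) (h t)
  | succ m IH =>
    intro g h hg hh h0
    rw [iteratedDeriv_succ']
    have hev : deriv (fun x => g x * h x) =ᶠ[𝓝 t]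
        fun x => deriv g x * h x + g x * deriv h x := by
      filter_upwards [auxEvDiff hg, auxEvDiff hh] with y h1 h2 using deriv_mul h1 h2
    rw [hev.iteratedDeriv_eq m, auxAdd t m
      (((auxDeriv hg).mul (hh.of_le (by exact_mod_cast le_top))))
      (hg.mul (auxDeriv hh))]
    have e1 : iteratedDeriv m (fun x => deriv g x * h x) t = 0 := by
      refine IH t (auxDeriv hg) hh fun k hk => ?_
      rw [← iteratedDeriv_succ']
      exact h0 (k+1) (by omega)
    have e2 : iteratedDeriv m (fun x => g x * deriv h x) t = 0 :=
      IH t hg (auxDeriv hh) fun k hk => h0 k (by omega)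
    rw [e1, e2, add_zero]

lemma auxBigO : ∀ (m : ℕ) {F : ℝ → ℝ} {t : ℝ}, ContDiffAt ℝ ∞ F t →
    (∀ k < m, iteratedDeriv k F t = 0) →
    F =O[𝓝 t] fun τ => (τ - t) ^ m := by
  intro m
  induction m with
  | zero =>
    intro F t hF _
    simpa using hF.continuousAt.tendsto.isBigO_one ℝ
  | succ m IH =>
    intro F t hF h0
    have hF0 : F t = 0 := by simpa [iteratedDeriv_zero] using h0 0 (Nat.succ_pos m)
    have hd : deriv F =O[𝓝 t] fun τ => (τ - t) ^ m := by
      refine IH (auxDeriv hF) fun k hk => ?_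
      rw [← iteratedDeriv_succ']
      exact h0 (k+1) (by omega)
    obtain ⟨C, hC⟩ := hd.bound
    have hC' : (0:ℝ) ≤ max C 0 := le_max_right _ _
    have hs : ∀ᶠ y in 𝓝 t, DifferentiableAt ℝ F y ∧ ‖deriv F y‖ ≤ max C 0 * ‖(y - t)^m‖ := by
      filter_upwards [auxEvDiff hF, hC] with y h1 h2
      exact ⟨h1, h2.trans (mul_le_mul_of_nonneg_right (le_max_left _ _) (norm_nonneg _))⟩
    obtain ⟨ε, εpos, hball⟩ := Metric.eventually_nhds_iff_ball.mp hs
    rw [isBigO_iff]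
    refine ⟨max C 0, ?_⟩
    filter_upwards [Metric.ball_mem_nhds t εpos] with τ hτ
    have hr : |τ - t| < ε := by simpa [Real.dist_eq] using hτ
    have hsub : Metric.closedBall t |τ - t| ⊆ Metric.ball t ε := Metric.closedBall_subset_ball hr
    have key := Convex.norm_image_sub_le_of_norm_deriv_le (𝕜 := ℝ) (f := F)
      (s := Metric.closedBall t |τ - t|) (C := max C 0 * |τ - t| ^ m) (x := t) (y := τ)
      (fun x hx => (hball x (hsub hx)).1)
      (fun x hx => by
        refine ((hball x (hsub hx)).2).trans ?_
        have hxr : |x - t| ≤ |τ - t| := by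
          simpa [Real.dist_eq] using Metric.mem_closedBall.mp hx
        calc max C 0 * ‖(x - t)^m‖ = max C 0 * |x - t| ^ m := by
              rw [Real.norm_eq_abs, abs_pow]
          _ ≤ max C 0 * |τ - t| ^ m :=
              mul_le_mul_of_nonneg_left (pow_le_pow_left₀ (abs_nonneg _) hxr m) hC')
      (convex_closedBall t |τ - t|)
      (Metric.mem_closedBall_self (abs_nonneg _))
      (by simp [Metric.mem_closedBall, Real.dist_eq])
    rw [hF0, sub_zero] at key
    calc ‖F τ‖ ≤ max C 0 * |τ - t| ^ m * ‖τ - t‖ := key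
      _ = max C 0 * ‖(τ - t) ^ (m+1)‖ := by
          rw [Real.norm_eq_abs, Real.norm_eq_abs, abs_pow, pow_succ]; ring

lemma auxIm : ∀ (m : ℕ) (u : ℝ → ℂ), ContDiff ℝ ∞ u → ∀ t : ℝ,
    iteratedDeriv m (fun τ => (u τ).im) t = (iteratedDeriv m u t).im := by
  intro m
  induction m with
  | zero => intro u _ t; simp [iteratedDeriv_zero]
  | succ m IH =>
    intro u hu t
    rw [iteratedDeriv_succ', iteratedDeriv_succ']
    have hdu : ContDiff ℝ ∞ (deriv u) := (contDiff_infty_iff_deriv.mp hu).2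
    have hev : deriv (fun τ => (u τ).im) = fun τ => (deriv u τ).im := by
      funext x
      have h1 : HasDerivAt u (deriv u x) x :=
        ((contDiff_infty_iff_deriv.mp hu).1 x).hasDerivAt
      exact ((Complex.imCLM.hasFDerivAt).comp_hasDerivAt x h1).deriv
    rw [hev]
    exact IH (deriv u) hdu t



/-- Let `ζ : ℝ → ℂ` be infinitely differentiable with `ζ'(τ) ≠ 0` for all
`τ` in a neighborhood of a fixed `t ∈ ℝ`, let `M ≥ 1` be an integer, let `φ : ℝ → ℝ` be
`M`-times differentiable, and suppose `f(τ) = Σ_{j=0}^{M} (c_j / j!) (ζ(τ) − ζ(t))^j` with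
`c₀, …, c_M ∈ ℂ` satisfies `f⁽ᵐ⁾(t) = φ⁽ᵐ⁾(t)` for `m = 0, …, M`. Then the function
`Q(τ) = Im(f'(τ)) / |ζ'(τ)|` satisfies `Q⁽ᵐ⁾(t) = 0` for every `m = 0, …, M − 1`;
consequently `Q(τ) = O((τ − t)^M)` as `τ → t`. -/
theorem stmt_9
    (ζ : ℝ → ℂ) (hζ : ContDiff ℝ (⊤ : ℕ∞) ζ)
    (t : ℝ) (hζ' : ∀ᶠ τ in nhds t, deriv ζ τ ≠ 0)
    (M : ℕ) (hM : 1 ≤ M)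
    (φ : ℝ → ℝ) (hφ : ∀ m < M, Differentiable ℝ (iteratedDeriv m φ))
    (c : Fin (M + 1) → ℂ) (f : ℝ → ℂ)
    (hf_def : f = fun τ : ℝ => ∑ j : Fin (M + 1),
      c j / (Nat.factorial (j : ℕ) : ℂ) * (ζ τ - ζ t) ^ (j : ℕ))
    (hf : ∀ m ≤ M, iteratedDeriv m f t = ((iteratedDeriv m φ t : ℝ) : ℂ))
    (Q : ℝ → ℝ)
    (hQ_def : Q = fun τ : ℝ => (deriv f τ).im / ‖deriv ζ τ‖) :
    (∀ m < M, iteratedDeriv m Q t = 0) ∧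
    Q =O[nhds t] fun τ : ℝ => (τ - t) ^ M := by
  have hzs : ContDiff ℝ ∞ ζ := hζ.of_le (by simp)
  have hfC : ContDiff ℝ ∞ f := by
    rw [hf_def]
    exact ContDiff.sum fun j _ =>
      contDiff_const.mul ((hzs.sub contDiff_const).pow (j : ℕ))
  have hdfC : ContDiff ℝ ∞ (deriv f) := (contDiff_infty_iff_deriv.mp hfC).2
  have hgC : ContDiff ℝ ∞ (fun τ => (deriv f τ).im) :=
    Complex.imCLM.contDiff.comp hdfC
  have hgim : ∀ k : ℕ, k + 1 ≤ M → iteratedDeriv k (fun τ => (deriv f τ).im) t = 0 := by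
    intro k hk
    rw [auxIm k (deriv f) hdfC t, ← iteratedDeriv_succ', hf (k+1) hk]
    exact Complex.ofReal_im _
  have hdζC : ContDiff ℝ ∞ (deriv ζ) := (contDiff_infty_iff_deriv.mp hzs).2
  have hne : deriv ζ t ≠ 0 := hζ'.self_of_nhds
  have habs : ContDiffAt ℝ ∞ (fun τ => ‖deriv ζ τ‖) t := by
    have : ContDiffAt ℝ ∞ (fun τ => ‖deriv ζ τ‖) t :=
      ContDiffAt.norm ℝ hdζC.contDiffAt hne
    exact this
  have habs0 : ‖deriv ζ t‖ ≠ 0 := by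
    simpa using hne
  have hhC : ContDiffAt ℝ ∞ (fun τ => (‖deriv ζ τ‖)⁻¹) t := habs.inv habs0
  have hQeq : Q = fun τ => (deriv f τ).im * (‖deriv ζ τ‖)⁻¹ := by
    rw [hQ_def]; funext τ; rw [div_eq_mul_inv]
  constructor
  · intro m hm
    rw [hQeq]
    exact auxMulVanish t m hgC.contDiffAt hhC fun k hk => hgim k (by omega)
  · have hQC : ContDiffAt ℝ ∞ Q t := by
      rw [hQeq]; exact hgC.contDiffAt.mul hhC
    refine auxBigO M hQC fun k hk => ?_
    rw [hQeq]
    exact auxMulVanish t k hgC.contDiffAt hhC fun j hj => hgim j (by omega)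
end

section
/- Let ζ : ℝ → ℂ be infinitely differentiable with ζ'(τ) ≠ 0 for all τ in a neighborhood of a fixed t ∈ ℝ, let M ≥ 0 be an integer, let φ : ℝ → ℝ be M-times differentiable, and suppose f(τ) = Σ_{j=1}^{M+1} (c_j / j!) (ζ(τ) − ζ(t))^j with c₁, …, c_{M+1} ∈ ℂ is such that g(τ) = f'(τ) / |ζ'(τ)| satisfies g⁽ᵐ⁾(t) = i φ⁽ᵐ⁾(t) for m = 0, …, M. Then the function P(τ) = Re(f(τ)) satisfies P⁽ᵐ⁾(t) = 0 for every m = 0, …, M + 1; consequently P(τ) = O((τ − t)^{M+2}) as τ → t. -/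
open Topology Filter Set Asymptotics
open scoped ContDiff

private lemma iterOpen {F : Type*} [NormedAddCommGroup F] [NormedSpace ℝ F]
    {s : Set ℝ} (hs : IsOpen s) {x : ℝ} (hx : x ∈ s) (n : ℕ) (f : ℝ → F) :
    iteratedDerivWithin n f s x = iteratedDeriv n f x := by
  rw [iteratedDerivWithin_eq_iteratedFDerivWithin, iteratedDeriv_eq_iteratedFDeriv,
    iteratedFDerivWithin_of_isOpen n hs hx]

private lemma iterAdd {s : Set ℝ} (hs : IsOpen s) {x : ℝ} (hx : x ∈ s) (n : ℕ)
    (F G : ℝ → ℂ) (hF : ContDiffOn ℝ ∞ F s) (hG : ContDiffOn ℝ ∞ G s) :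
    iteratedDeriv n (fun τ => F τ + G τ) x = iteratedDeriv n F x + iteratedDeriv n G x := by
  rw [← iterOpen hs hx, ← iterOpen hs hx, ← iterOpen hs hx]
  exact iteratedDerivWithin_add hx hs.uniqueDiffOn
    ((hF x hx).of_le (WithTop.coe_le_coe.mpr le_top)) ((hG x hx).of_le (WithTop.coe_le_coe.mpr le_top))

private lemma clmComp {F G : Type*} [NormedAddCommGroup F] [NormedSpace ℝ F]
    [NormedAddCommGroup G] [NormedSpace ℝ G] (L : F →L[ℝ] G) {f : ℝ → F}
    (hf : ContDiff ℝ ∞ f) (n : ℕ) (x : ℝ) :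
    iteratedDeriv n (fun τ => L (f τ)) x = L (iteratedDeriv n f x) := by
  rw [iteratedDeriv_eq_iteratedFDeriv, iteratedDeriv_eq_iteratedFDeriv]
  rw [show (fun τ => L (f τ)) = L ∘ f from rfl,
    L.iteratedFDeriv_comp_left (x := x) hf.contDiffAt (i := n) (WithTop.coe_le_coe.mpr le_top)]
  rfl

private lemma clmCompWithin {F G : Type*} [NormedAddCommGroup F] [NormedSpace ℝ F]
    [NormedAddCommGroup G] [NormedSpace ℝ G] (L : F →L[ℝ] G) {f : ℝ → F} {s : Set ℝ}
    (hs : IsOpen s) {x : ℝ} (hx : x ∈ s) (hf : ContDiffOn ℝ ∞ f s) (n : ℕ) :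
    iteratedDerivWithin n (fun τ => L (f τ)) s x = L (iteratedDerivWithin n f s x) := by
  rw [iteratedDerivWithin_eq_iteratedFDerivWithin, iteratedDerivWithin_eq_iteratedFDerivWithin]
  rw [show (fun τ => L (f τ)) = L ∘ f from rfl,
    L.iteratedFDerivWithin_comp_left (hf x hx) hs.uniqueDiffOn hx (i := n) (WithTop.coe_le_coe.mpr le_top)]
  rfl

private lemma keyMul {t : ℝ} {s : Set ℝ} (hs : IsOpen s) (ht : t ∈ s) :
    ∀ k : ℕ, ∀ u v : ℝ → ℂ, ContDiffOn ℝ ∞ u s → ContDiffOn ℝ ∞ v s →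
      (∀ m ≤ k, (iteratedDeriv m u t).re = 0) → (∀ m ≤ k, (iteratedDeriv m v t).im = 0) →
      (iteratedDeriv k (fun τ => u τ * v τ) t).re = 0 := by
  intro k
  induction k with
  | zero =>
    intro u v hu hv hu0 hv0
    have h1 := hu0 0 le_rfl
    have h2 := hv0 0 le_rfl
    simp only [iteratedDeriv_zero] at h1 h2 ⊢
    simp [Complex.mul_re, h1, h2]
  | succ k ih =>
    intro u v hu hv hu0 hv0
    have hone : (1 : WithTop ℕ∞) ≤ ∞ := by exact_mod_cast le_top
    have hu' : ContDiffOn ℝ ∞ (deriv u) s := hu.deriv_of_isOpen hs (by simp)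
    have hv' : ContDiffOn ℝ ∞ (deriv v) s := hv.deriv_of_isOpen hs (by simp)
    have heq : deriv (fun τ => u τ * v τ)
        =ᶠ[𝓝 t] fun τ => deriv u τ * v τ + u τ * deriv v τ := by
      filter_upwards [hs.mem_nhds ht] with τ hτ
      exact deriv_fun_mul ((hu.contDiffAt (hs.mem_nhds hτ)).differentiableAt (by simp))
        ((hv.contDiffAt (hs.mem_nhds hτ)).differentiableAt (by simp))
    rw [iteratedDeriv_succ', Filter.EventuallyEq.iteratedDeriv_eq k heq,
      iterAdd hs ht k _ _ (hu'.mul hv) (hu.mul hv'), Complex.add_re]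
    have e1 : (iteratedDeriv k (fun τ => deriv u τ * v τ) t).re = 0 := by
      refine ih (deriv u) v hu' hv (fun m hm => ?_) (fun m hm => hv0 m (by omega))
      rw [← iteratedDeriv_succ']
      exact hu0 (m + 1) (by omega)
    have e2 : (iteratedDeriv k (fun τ => u τ * deriv v τ) t).re = 0 := by
      refine ih u (deriv v) hu hv' (fun m hm => hu0 m (by omega)) (fun m hm => ?_)
      rw [← iteratedDeriv_succ']
      exact hv0 (m + 1) (by omega)
    rw [e1, e2, add_zero]

private lemma bigO_lem : ∀ (n : ℕ) (u : ℝ → ℝ) (t : ℝ), ContDiff ℝ ∞ u →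
    (∀ m ≤ n, iteratedDeriv m u t = 0) →
    u =O[𝓝 t] fun x => (x - t) ^ (n + 1) := by
  have hone : (1 : WithTop ℕ∞) ≤ ∞ := by exact_mod_cast le_top
  intro n
  induction n with
  | zero =>
    intro u t hu h0
    have h1 : u t = 0 := by simpa using h0 0 le_rfl
    have hb := ((hu.differentiable (by simp)) t).hasFDerivAt.isBigO_sub
    have : u =O[𝓝 t] fun x => x - t := by simpa [h1] using hb
    simpa using this
  | succ n ih =>
    intro u t hu h0
    have hd : ContDiff ℝ ∞ (deriv u) := (contDiff_infty_iff_deriv.mp hu).2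
    have h0' : ∀ m ≤ n, iteratedDeriv m (deriv u) t = 0 := by
      intro m hm
      rw [← iteratedDeriv_succ']
      exact h0 (m + 1) (by omega)
    obtain ⟨C, hC⟩ := (ih (deriv u) t hd h0').bound
    obtain ⟨δ, hδ, hδC⟩ := Metric.eventually_nhds_iff.mp hC
    rw [Asymptotics.isBigO_iff]
    refine ⟨max C 0, ?_⟩
    rw [Metric.eventually_nhds_iff]
    refine ⟨δ, hδ, fun x hx => ?_⟩
    have hint : ∫ y in t..x, deriv u y = u x - u t :=
      intervalIntegral.integral_deriv_eq_sub
        (fun y _ => (hu.differentiable (by simp)) y)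
        ((hd.continuous.intervalIntegrable _ _))
    have h1 : u t = 0 := by simpa using h0 0 (by omega)
    have hb : ∀ y ∈ Set.uIoc t x, ‖deriv u y‖ ≤ max C 0 * |x - t| ^ (n + 1) := by
      intro y hy
      have hy' : |y - t| ≤ |x - t| := abs_sub_left_of_mem_uIcc (Set.uIoc_subset_uIcc hy)
      have hdy : dist y t < δ :=
        lt_of_le_of_lt (by simpa [Real.dist_eq] using hy') (by simpa [Real.dist_eq] using hx)
      calc ‖deriv u y‖ ≤ C * ‖(y - t) ^ (n + 1)‖ := hδC hdy
        _ ≤ max C 0 * |x - t| ^ (n + 1) := by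
            rw [norm_pow, Real.norm_eq_abs]
            exact mul_le_mul (le_max_left _ _)
              (pow_le_pow_left₀ (abs_nonneg _) hy' _)
              (pow_nonneg (abs_nonneg _) _) (le_max_right _ _)
    have hI := intervalIntegral.norm_integral_le_of_norm_le_const hb
    rw [hint, h1, sub_zero] at hI
    calc ‖u x‖ ≤ max C 0 * |x - t| ^ (n + 1) * |x - t| := hI
      _ = max C 0 * ‖(x - t) ^ (n + 1 + 1)‖ := by
          rw [norm_pow, Real.norm_eq_abs, pow_succ]; ring

/-- Let `ζ : ℝ → ℂ` be infinitely differentiable with `ζ'(τ) ≠ 0` for all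
`τ` in a neighborhood of a fixed `t ∈ ℝ`, let `M ≥ 0` be an integer, let `φ : ℝ → ℝ` be
`M`-times differentiable, and suppose `f(τ) = Σ_{j=1}^{M+1} (c_j / j!) (ζ(τ) − ζ(t))^j`
with `c₁, …, c_{M+1} ∈ ℂ` is such that `g(τ) = f'(τ) / |ζ'(τ)|` satisfies
`g⁽ᵐ⁾(t) = i φ⁽ᵐ⁾(t)` for `m = 0, …, M`. Then the function `P(τ) = Re(f(τ))` satisfies
`P⁽ᵐ⁾(t) = 0` for every `m = 0, …, M + 1`; consequently `P(τ) = O((τ − t)^(M+2))` as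
`τ → t`.  (Here `c : Fin (M+1) → ℂ` collects the coefficients `c_1, …, c_{M+1}`.) -/
theorem stmt_10
    (ζ : ℝ → ℂ) (hζ : ContDiff ℝ (⊤ : ℕ∞) ζ)
    (t : ℝ) (hζ' : ∀ᶠ τ in nhds t, deriv ζ τ ≠ 0)
    (M : ℕ)
    (φ : ℝ → ℝ) (hφ : ∀ m < M, Differentiable ℝ (iteratedDeriv m φ))
    (c : Fin (M + 1) → ℂ) (f : ℝ → ℂ)
    (hf_def : f = fun τ : ℝ => ∑ j : Fin (M + 1),
      c j / (Nat.factorial ((j : ℕ) + 1) : ℂ) * (ζ τ - ζ t) ^ ((j : ℕ) + 1))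
    (g : ℝ → ℂ)
    (hg_def : g = fun τ : ℝ => deriv f τ / ((‖deriv ζ τ‖ : ℝ) : ℂ))
    (hg : ∀ m ≤ M, iteratedDeriv m g t = Complex.I * ((iteratedDeriv m φ t : ℝ) : ℂ))
    (P : ℝ → ℝ)
    (hP_def : P = fun τ : ℝ => (f τ).re) :
    (∀ m ≤ M + 1, iteratedDeriv m P t = 0) ∧
    P =O[nhds t] fun τ : ℝ => (τ - t) ^ (M + 2) := by
  have hone : (1 : WithTop ℕ∞) ≤ ∞ := by exact_mod_cast le_top
  have hzinf : ContDiff ℝ ∞ ζ := hζ.of_le (by simp)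
  -- neighborhood where ζ' ≠ 0
  obtain ⟨ε, hε, hball⟩ := Metric.eventually_nhds_iff.mp hζ'
  set s : Set ℝ := Metric.ball t ε with hs_def
  have hs : IsOpen s := Metric.isOpen_ball
  have ht : t ∈ s := Metric.mem_ball_self hε
  have hball' : ∀ x ∈ s, deriv ζ x ≠ 0 := fun x hx => hball (Metric.mem_ball.mp hx)
  -- smoothness of f, P
  have hfinf : ContDiff ℝ ∞ f := by
    rw [hf_def]
    exact ContDiff.sum fun j _ => contDiff_const.mul ((hzinf.sub contDiff_const).pow _)
  have hPinf : ContDiff ℝ ∞ P := by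
    rw [hP_def]
    exact Complex.reCLM.contDiff.comp hfinf
  have hre : ∀ n : ℕ, iteratedDeriv n P t = (iteratedDeriv n f t).re := by
    intro n
    rw [hP_def]
    exact clmComp Complex.reCLM hfinf n t
  -- the real-valued factor
  set h : ℝ → ℂ := fun τ => ((‖deriv ζ τ‖ : ℝ) : ℂ) with hh_def
  have hdζ : ContDiff ℝ ∞ (deriv ζ) := (contDiff_infty_iff_deriv.mp hzinf).2
  have hr : ContDiffOn ℝ ∞ (fun τ => ‖deriv ζ τ‖) s := by
    exact ContDiffOn.norm ℂ hdζ.contDiffOn hball'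
  have hh : ContDiffOn ℝ ∞ h s :=
    Complex.ofRealCLM.contDiff.comp_contDiffOn hr
  have hhne : ∀ x ∈ s, h x ≠ 0 := by
    intro x hx
    simp only [hh_def, ne_eq, Complex.ofReal_eq_zero, norm_eq_zero]
    exact hball' x hx
  have hv0 : ∀ m : ℕ, (iteratedDeriv m h t).im = 0 := by
    intro m
    rw [← iterOpen hs ht m h, hh_def]
    simp only [← Complex.ofRealCLM_apply]
    rw [clmCompWithin Complex.ofRealCLM hs ht hr m]
    simp
  -- g is smooth on s and deriv f = g * h near t
  have hgs : ContDiffOn ℝ ∞ g s := by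
    rw [hg_def]
    simp only [div_eq_mul_inv]
    exact ContDiffOn.mul ((contDiff_infty_iff_deriv.mp hfinf).2.contDiffOn) (hh.inv hhne)
  have heqdf : deriv f =ᶠ[𝓝 t] fun τ => g τ * h τ := by
    filter_upwards [hs.mem_nhds ht] with τ hτ
    rw [hg_def]
    exact (div_mul_cancel₀ _ (hhne τ hτ)).symm
  -- part A
  have hA : ∀ m ≤ M + 1, iteratedDeriv m P t = 0 := by
    intro m hm
    rw [hre m]
    match m, hm with
    | 0, _ =>
      simp only [iteratedDeriv_zero, hf_def]
      simp
    | (k + 1), hm =>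
      have hk : k ≤ M := by omega
      rw [iteratedDeriv_succ', Filter.EventuallyEq.iteratedDeriv_eq k heqdf]
      refine keyMul hs ht k g h hgs hh (fun m' hm' => ?_) (fun m' _ => hv0 m')
      rw [hg m' (hm'.trans hk)]
      simp
  refine ⟨hA, ?_⟩
  have := bigO_lem (M + 1) P t hPinf hA
  simpa using this
end

section
/- For all real numbers f_u, f_v and every real 5×4 matrix B, setting g = 1 + f_u² + f_v², the 9×9 block lower-triangular real matrix A = [[A₁₁, 0], [B, A₂₂]] — where A₁₁ is the 4×4 matrix with rows (1, 0, 0, 0), (0, 1, 0, f_u), (0, 0, 1, f_v), (0, −f_u/√g, −f_v/√g, 1/√g), and A₂₂ is the 5×5 matrix with rows (−f_v/√g, (1 − f_u²)/√g, −f_u f_v/√g, −2 f_u/√g, −4 f_u/√g), (−f_u/√g, −f_v f_u/√g, (1 − f_v²)/√g, 2 f_v/√g, −2 f_v/√g), (0, 2 f_u, 0, 2, 2(1 − f_u²)), (1, f_v, f_u, 0, −2 f_u f_v), (0, 0, 2 f_v, −2, −2 f_v²) — has determinant det(A) = −4 g^{5/2}; in particular A is invertible. -/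
set_option maxHeartbeats 4000000 in
theorem det4x4_aux (a00 a01 a02 a03 a10 a11 a12 a13 a20 a21 a22 a23 a30 a31 a32 a33 : ℝ) :
    (!![a00, a01, a02, a03;
      a10, a11, a12, a13;
      a20, a21, a22, a23;
      a30, a31, a32, a33]).det =
    a00*a11*a22*a33 - a00*a11*a23*a32 - a00*a12*a21*a33 + a00*a12*a23*a31 + a00*a13*a21*a32 - a00*a13*a22*a31 - a01*a10*a22*a33 + a01*a10*a23*a32 + a01*a12*a20*a33 - a01*a12*a23*a30 - a01*a13*a20*a32 + a01*a13*a22*a30 + a02*a10*a21*a33 - a02*a10*a23*a31 - a02*a11*a20*a33 + a02*a11*a23*a30 + a02*a13*a20*a31 - a02*a13*a21*a30 - a03*a10*a21*a32 + a03*a10*a22*a31 + a03*a11*a20*a32 - a03*a11*a22*a30 - a03*a12*a20*a31 + a03*a12*a21*a30 := by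
  simp [Matrix.det_succ_row_zero, Fin.sum_univ_succ, Matrix.det_fin_three,
    Fin.succAbove, Matrix.cons_val_succ, Fin.castSucc, Fin.castAdd, Fin.castLE]
  ring

set_option maxHeartbeats 4000000 in
theorem det5x5_aux (a00 a01 a02 a03 a04 a10 a11 a12 a13 a14 a20 a21 a22 a23 a24 a30 a31 a32 a33 a34 a40 a41 a42 a43 a44 : ℝ) :
    (!![a00, a01, a02, a03, a04;
      a10, a11, a12, a13, a14;
      a20, a21, a22, a23, a24;
      a30, a31, a32, a33, a34;
      a40, a41, a42, a43, a44]).det =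
    a00*a11*a22*a33*a44 - a00*a11*a22*a34*a43 - a00*a11*a23*a32*a44 + a00*a11*a23*a34*a42 + a00*a11*a24*a32*a43 - a00*a11*a24*a33*a42 - a00*a12*a21*a33*a44 + a00*a12*a21*a34*a43 + a00*a12*a23*a31*a44 - a00*a12*a23*a34*a41 - a00*a12*a24*a31*a43 + a00*a12*a24*a33*a41 + a00*a13*a21*a32*a44 - a00*a13*a21*a34*a42 - a00*a13*a22*a31*a44 + a00*a13*a22*a34*a41 + a00*a13*a24*a31*a42 - a00*a13*a24*a32*a41 - a00*a14*a21*a32*a43 + a00*a14*a21*a33*a42 + a00*a14*a22*a31*a43 - a00*a14*a22*a33*a41 - a00*a14*a23*a31*a42 + a00*a14*a23*a32*a41 - a01*a10*a22*a33*a44 + a01*a10*a22*a34*a43 + a01*a10*a23*a32*a44 - a01*a10*a23*a34*a42 - a01*a10*a24*a32*a43 + a01*a10*a24*a33*a42 + a01*a12*a20*a33*a44 - a01*a12*a20*a34*a43 - a01*a12*a23*a30*a44 + a01*a12*a23*a34*a40 + a01*a12*a24*a30*a43 - a01*a12*a24*a33*a40 - a01*a13*a20*a32*a44 + a01*a13*a20*a34*a42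 + a01*a13*a22*a30*a44 - a01*a13*a22*a34*a40 - a01*a13*a24*a30*a42 + a01*a13*a24*a32*a40 + a01*a14*a20*a32*a43 - a01*a14*a20*a33*a42 - a01*a14*a22*a30*a43 + a01*a14*a22*a33*a40 + a01*a14*a23*a30*a42 - a01*a14*a23*a32*a40 + a02*a10*a21*a33*a44 - a02*a10*a21*a34*a43 - a02*a10*a23*a31*a44 + a02*a10*a23*a34*a41 + a02*a10*a24*a31*a43 - a02*a10*a24*a33*a41 - a02*a11*a20*a33*a44 + a02*a11*a20*a34*a43 + a02*a11*a23*a30*a44 - a02*a11*a23*a34*a40 - a02*a11*a24*a30*a43 + a02*a11*a24*a33*a40 + a02*a13*a20*a31*a44 - a02*a13*a20*a34*a41 - a02*a13*a21*a30*a44 + a02*a13*a21*a34*a40 + a02*a13*a24*a30*a41 - a02*a13*a24*a31*a40 - a02*a14*a20*a31*a43 + a02*a14*a20*a33*a41 + a02*a14*a21*a30*a43 - a02*a14*a21*a33*a40 - a02*a14*a23*a30*a41 + a02*a14*a23*a31*a40 - a03*a10*a21*a32*a44 + a03*a10*a21*a34*a42 + a03*a10*a22*a31*a44 - a03*a10*a22*a34*a41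 - a03*a10*a24*a31*a42 + a03*a10*a24*a32*a41 + a03*a11*a20*a32*a44 - a03*a11*a20*a34*a42 - a03*a11*a22*a30*a44 + a03*a11*a22*a34*a40 + a03*a11*a24*a30*a42 - a03*a11*a24*a32*a40 - a03*a12*a20*a31*a44 + a03*a12*a20*a34*a41 + a03*a12*a21*a30*a44 - a03*a12*a21*a34*a40 - a03*a12*a24*a30*a41 + a03*a12*a24*a31*a40 + a03*a14*a20*a31*a42 - a03*a14*a20*a32*a41 - a03*a14*a21*a30*a42 + a03*a14*a21*a32*a40 + a03*a14*a22*a30*a41 - a03*a14*a22*a31*a40 + a04*a10*a21*a32*a43 - a04*a10*a21*a33*a42 - a04*a10*a22*a31*a43 + a04*a10*a22*a33*a41 + a04*a10*a23*a31*a42 - a04*a10*a23*a32*a41 - a04*a11*a20*a32*a43 + a04*a11*a20*a33*a42 + a04*a11*a22*a30*a43 - a04*a11*a22*a33*a40 - a04*a11*a23*a30*a42 + a04*a11*a23*a32*a40 + a04*a12*a20*a31*a43 - a04*a12*a20*a33*a41 - a04*a12*a21*a30*a43 + a04*a12*a21*a33*a40 + a04*a12*a23*a30*a41 - a04*a12*a23*a31*a40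 - a04*a13*a20*a31*a42 + a04*a13*a20*a32*a41 + a04*a13*a21*a30*a42 - a04*a13*a21*a32*a40 - a04*a13*a22*a30*a41 + a04*a13*a22*a31*a40 := by
  simp [Matrix.det_succ_row_zero, Fin.sum_univ_succ, Matrix.det_fin_three,
    Fin.succAbove, Matrix.cons_val_succ, Fin.castSucc, Fin.castAdd, Fin.castLE]
  ring


set_option maxHeartbeats 1000000 in
theorem main_det (fu fv : ℝ) (g : ℝ) (hg : g = 1 + fu ^ 2 + fv ^ 2) :
    (!![(1 : ℝ), 0, 0, 0;
          0, 1, 0, fu;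
          0, 0, 1, fv;
          0, -fu / Real.sqrt g, -fv / Real.sqrt g, 1 / Real.sqrt g]).det *
    (!![-fv / Real.sqrt g, (1 - fu ^ 2) / Real.sqrt g, -fu * fv / Real.sqrt g,
            -2 * fu / Real.sqrt g, -4 * fu / Real.sqrt g;
          -fu / Real.sqrt g, -fv * fu / Real.sqrt g, (1 - fv ^ 2) / Real.sqrt g,
            2 * fv / Real.sqrt g, -2 * fv / Real.sqrt g;
          0, 2 * fu, 0, 2, 2 * (1 - fu ^ 2);
          1, fv, fu, 0, -2 * fu * fv;
          0, 0, 2 * fv, -2, -2 * fv ^ 2]).det = -4 * g ^ ((5:ℝ)/2) := by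
  have hg0 : (0:ℝ) < g := by nlinarith [sq_nonneg fu, sq_nonneg fv]
  have hs0 : Real.sqrt g ≠ 0 := ne_of_gt (Real.sqrt_pos.mpr hg0)
  have hs2 : Real.sqrt g * Real.sqrt g = g := Real.mul_self_sqrt hg0.le
  have h52 : g ^ ((5:ℝ)/2) = g ^ 2 * Real.sqrt g := by
    rw [Real.sqrt_eq_rpow, ← Real.rpow_natCast g 2, ← Real.rpow_add hg0]; norm_num
  rw [h52, det4x4_aux, det5x5_aux]
  field_simp
  ring_nf
  rw [show Real.sqrt g ^ 4 = (Real.sqrt g ^ 2) ^ 2 by ring, Real.sq_sqrt hg0.le, hg]; ring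

/-- For all real numbers `f_u, f_v` and every real `5×4` matrix `B`,
setting `g = 1 + f_u² + f_v²`, the `9×9` block lower-triangular real matrix
`A = [[A₁₁, 0], [B, A₂₂]]` — with `A₁₁` and `A₂₂` the blocks of the 3D harmonic density
interpolation matrix — has determinant `det(A) = −4 g^(5/2)`; in particular `A` is
invertible. -/
theorem stmt_14 (fu fv : ℝ) (g : ℝ) (hg : g = 1 + fu ^ 2 + fv ^ 2)
    (B : Matrix (Fin 5) (Fin 4) ℝ) :
    (Matrix.fromBlocks
      (!![(1 : ℝ), 0, 0, 0;
          0, 1, 0, fu;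
          0, 0, 1, fv;
          0, -fu / Real.sqrt g, -fv / Real.sqrt g, 1 / Real.sqrt g])
      (0 : Matrix (Fin 4) (Fin 5) ℝ)
      B
      (!![-fv / Real.sqrt g, (1 - fu ^ 2) / Real.sqrt g, -fu * fv / Real.sqrt g,
            -2 * fu / Real.sqrt g, -4 * fu / Real.sqrt g;
          -fu / Real.sqrt g, -fv * fu / Real.sqrt g, (1 - fv ^ 2) / Real.sqrt g,
            2 * fv / Real.sqrt g, -2 * fv / Real.sqrt g;
          0, 2 * fu, 0, 2, 2 * (1 - fu ^ 2);
          1, fv, fu, 0, -2 * fu * fv;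
          0, 0, 2 * fv, -2, -2 * fv ^ 2])).det
    = -4 * g ^ ((5 : ℝ) / 2) ∧
    IsUnit (Matrix.fromBlocks
      (!![(1 : ℝ), 0, 0, 0;
          0, 1, 0, fu;
          0, 0, 1, fv;
          0, -fu / Real.sqrt g, -fv / Real.sqrt g, 1 / Real.sqrt g])
      (0 : Matrix (Fin 4) (Fin 5) ℝ)
      B
      (!![-fv / Real.sqrt g, (1 - fu ^ 2) / Real.sqrt g, -fu * fv / Real.sqrt g,
            -2 * fu / Real.sqrt g, -4 * fu / Real.sqrt g;
          -fu / Real.sqrt g, -fv * fu / Real.sqrt g, (1 - fv ^ 2) / Real.sqrt g,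
            2 * fv / Real.sqrt g, -2 * fv / Real.sqrt g;
          0, 2 * fu, 0, 2, 2 * (1 - fu ^ 2);
          1, fv, fu, 0, -2 * fu * fv;
          0, 0, 2 * fv, -2, -2 * fv ^ 2])) := by
  have hz : (0 : Matrix (Fin 4) (Fin 5) ℝ) =
      @OfNat.ofNat (Matrix (Fin 4) (Fin 5) ℝ) (nat_lit 0)
        (@Zero.toOfNat0 (Matrix (Fin 4) (Fin 5) ℝ)
          (@Matrix.zero (Fin 4) (Fin 5) ℝ
            (@CommMonoidWithZero.toZero ℝ
              (@CommSemiring.toCommMonoidWithZero ℝ (@CommRing.toCommSemiring ℝ Real.commRing))))) := rfl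
  have hm : ∀ x y : ℝ, x * y =
      @HMul.hMul ℝ ℝ ℝ (@instHMul ℝ (@NonUnitalNonAssocRing.toMul ℝ
        (@NonUnitalNonAssocCommRing.toNonUnitalNonAssocRing ℝ
          (@NonUnitalCommRing.toNonUnitalNonAssocCommRing ℝ
            (@CommRing.toNonUnitalCommRing ℝ Real.commRing))))) x y := fun _ _ => rfl
  have hstep := (Matrix.det_fromBlocks_zero₁₂
      (!![(1 : ℝ), 0, 0, 0;
          0, 1, 0, fu;
          0, 0, 1, fv;
          0, -fu / Real.sqrt g, -fv / Real.sqrt g, 1 / Real.sqrt g])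
      B
      (!![-fv / Real.sqrt g, (1 - fu ^ 2) / Real.sqrt g, -fu * fv / Real.sqrt g,
            -2 * fu / Real.sqrt g, -4 * fu / Real.sqrt g;
          -fu / Real.sqrt g, -fv * fu / Real.sqrt g, (1 - fv ^ 2) / Real.sqrt g,
            2 * fv / Real.sqrt g, -2 * fv / Real.sqrt g;
          0, 2 * fu, 0, 2, 2 * (1 - fu ^ 2);
          1, fv, fu, 0, -2 * fu * fv;
          0, 0, 2 * fv, -2, -2 * fv ^ 2])).trans (hm _ _).symm
  have hdet := hstep.trans (main_det fu fv g hg)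
  have hg0 : (0:ℝ) < g := by nlinarith [sq_nonneg fu, sq_nonneg fv]
  constructor
  · rw [hz]; exact hdet
  · rw [Matrix.isUnit_iff_isUnit_det, hz, hdet, isUnit_iff_ne_zero]
    exact ne_of_lt (mul_neg_of_neg_of_pos (by norm_num) (Real.rpow_pos_of_pos hg0 _))
end
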